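/- arXiv:2512.06794 — 3 statements merged into one kernel-verified Lean document; each statement's English description precedes it below -/
import Mathlib

section
/- For every probability vector π on K that is invariant for M (i.e., πM = π), the trajectory δ ↦ v_δ(π) is non-increasing on [0,1): for all δ₁, δ₂ with 0 ≤ δ₁ ≤ δ₂ < 1 one has v_{δ₂}(π) ≤ v_{δ₁}(π). -/
open scoped BigOperators

noncomputable section

/-- A row-stochastic matrix: nonnegative entries, rows summing to 1. -/
def IsStochastic {K : Type*} [Fintype K] (M : Matrix K K ℝ) : Prop :=
  (∀ i j, 0 ≤ M i j) ∧ ∀ i, ∑ j, M i j = 1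

/-- A split of `ξ`: a countable family of weights `α` and beliefs `ξs` with
`α s ≥ 0`, `ξs s ∈ Δ(K)`, `∑ α = 1` and `∑ α_s ξ_s = ξ`. -/
def IsSplit {K : Type*} [Fintype K] (ξ : K → ℝ) (α : ℕ → ℝ) (ξs : ℕ → K → ℝ) : Prop :=
  (∀ s, 0 ≤ α s) ∧ (∀ s, ξs s ∈ stdSimplex ℝ K) ∧ (∑' s, α s) = 1 ∧
    ∀ ℓ : K, (∑' s, α s * ξs s ℓ) = ξ ℓ

/-- The one-stage payoff of a split in the δ-discounted Bellman equation. -/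
def splitPayoff {K : Type*} [Fintype K] (M : Matrix K K ℝ) (u : (K → ℝ) → ℝ) (δ : ℝ)
    (w : (K → ℝ) → ℝ) (α : ℕ → ℝ) (ξs : ℕ → K → ℝ) : ℝ :=
  ∑' s, α s * ((1 - δ) * u (ξs s) + δ * w (Matrix.vecMul (ξs s) M))

/-- `v` is the family of δ-discounted values of the Markovian persuasion game:
for each `δ ∈ [0,1)`, `v δ` is bounded between `0` and `C = ‖u‖∞` on `Δ(K)` and
satisfies the Bellman equation there. -/
def IsValueFamily {K : Type*} [Fintype K] (M : Matrix K K ℝ) (u : (K → ℝ) → ℝ) (C : ℝ)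
    (v : ℝ → (K → ℝ) → ℝ) : Prop :=
  ∀ δ ∈ Set.Ico (0 : ℝ) 1,
    (∀ ξ ∈ stdSimplex ℝ K, 0 ≤ v δ ξ ∧ v δ ξ ≤ C) ∧
    ∀ ξ ∈ stdSimplex ℝ K,
      v δ ξ = sSup { r : ℝ | ∃ α ξs, IsSplit ξ α ξs ∧ r = splitPayoff M u δ (v δ) α ξs }

/-!
Fix `ε > 0` and a stationary strategy `σ` that is `ε (1 - δ₂)`-optimal in the `δ₂`-Bellman
equation at every belief. Because `π` is invariant, the law of the prior at every stage `k` under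
`σ` is a split of `π`. Let `a k` be the expected stage-`k` payoff and `E δ k` the expected `δ`-value
of the stage-`k` prior. The Bellman equation gives
`E δ₂ k ≤ (1 - δ₂) a k + δ₂ E δ₂ (k + 1) + ε (1 - δ₂)`, hence
`v δ₂ π ≤ (1 - δ₂) ∑ δ₂ ^ k a k + ε`, and `(1 - δ₁) a k + δ₁ E δ₁ (k + 1) ≤ E δ₁ k ≤ v δ₁ π`,
the last step by concavity of `v δ₁` along splits. Abel summation turns the latter family of
inequalities into `(1 - δ₂) ∑ δ₂ ^ k a k ≤ v δ₁ π` whenever `δ₁ ≤ δ₂`.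
-/

open Matrix Set

section Discounting

variable {a E : ℕ → ℝ} {B δ : ℝ}

lemma summable_pow_mul_of_abs_le (hδ0 : 0 ≤ δ) (hδ1 : δ < 1) (ha : ∀ k, |a k| ≤ B) :
    Summable fun k => δ ^ k * a k :=
  Summable.of_norm_bounded ((summable_geometric_of_lt_one hδ0 hδ1).mul_right B) fun k => by
    rw [norm_mul, norm_pow, Real.norm_of_nonneg hδ0, Real.norm_eq_abs]
    exact mul_le_mul_of_nonneg_left (ha k) (pow_nonneg hδ0 k)

lemma hasSum_pow_mul_sub_mul_succ (hδ0 : 0 ≤ δ) (hδ1 : δ < 1) (hE : ∀ k, |E k| ≤ B) :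
    HasSum (fun k => δ ^ k * (E k - δ * E (k + 1))) (E 0) := by
  have htel : ∀ k, δ ^ k * (E k - δ * E (k + 1)) = δ ^ k * E k - δ ^ (k + 1) * E (k + 1) :=
    fun k => by ring
  have hsum : Summable fun k => δ ^ k * (E k - δ * E (k + 1)) :=
    summable_pow_mul_of_abs_le hδ0 hδ1 (B := B + δ * B) fun k => by
      have := abs_sub (E k) (δ * E (k + 1))
      rw [abs_mul, abs_of_nonneg hδ0] at this
      nlinarith [hE k, hE (k + 1)]
  have hlim : Filter.Tendsto (fun n => δ ^ n * E n) Filter.atTop (nhds 0) := by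
    refine squeeze_zero_norm (fun n => ?_)
      (by simpa using (tendsto_pow_atTop_nhds_zero_of_lt_one hδ0 hδ1).mul_const B)
    rw [norm_mul, norm_pow, Real.norm_of_nonneg hδ0, Real.norm_eq_abs]
    exact mul_le_mul_of_nonneg_left (hE n) (pow_nonneg hδ0 n)
  refine hsum.hasSum_iff_tendsto_nat.2 ?_
  simp_rw [htel, Finset.sum_range_sub' (fun k => δ ^ k * E k), pow_zero, one_mul]
  simpa using (tendsto_const_nhds (x := E 0)).sub hlim

lemma le_tsum_pow_mul_add_of_le (hδ0 : 0 ≤ δ) (hδ1 : δ < 1) (ha : ∀ k, |a k| ≤ B)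
    (hE : ∀ k, |E k| ≤ B) {c : ℝ} (hstep : ∀ k, E k ≤ (1 - δ) * a k + δ * E (k + 1) + c) :
    E 0 ≤ (1 - δ) * ∑' k, δ ^ k * a k + c / (1 - δ) := by
  have hrhs : HasSum (fun k => (1 - δ) * (δ ^ k * a k) + δ ^ k * c)
      ((1 - δ) * ∑' k, δ ^ k * a k + c / (1 - δ)) := by
    rw [div_eq_mul_inv, mul_comm c]
    exact ((summable_pow_mul_of_abs_le hδ0 hδ1 ha).hasSum.mul_left _).add
      ((hasSum_geometric_of_lt_one hδ0 hδ1).mul_right c)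
  refine hasSum_le (fun k => ?_) (hasSum_pow_mul_sub_mul_succ hδ0 hδ1 hE) hrhs
  have := mul_le_mul_of_nonneg_left (hstep k) (pow_nonneg hδ0 k)
  linarith

lemma tsum_pow_mul_le_of_le {δ₁ δ₂ y : ℝ} (hδ₁ : 0 ≤ δ₁) (h₁₂ : δ₁ ≤ δ₂) (hδ₂ : δ₂ < 1)
    (ha : ∀ k, |a k| ≤ B) (hE : ∀ k, |E k| ≤ B)
    (hstep : ∀ k, (1 - δ₁) * a k + δ₁ * E (k + 1) ≤ E k) (hy : ∀ k, E k ≤ y) :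
    (1 - δ₂) * ∑' k, δ₂ ^ k * a k ≤ y := by
  have hδ₂0 : 0 ≤ δ₂ := hδ₁.trans h₁₂
  set S := ∑' k, δ₂ ^ k * a k
  set T := ∑' k, δ₂ ^ k * E (k + 1)
  have hT : HasSum (fun k => δ₂ ^ k * E (k + 1)) T :=
    (summable_pow_mul_of_abs_le hδ₂0 hδ₂ fun k => hE (k + 1)).hasSum
  have hTy : T ≤ (1 - δ₂)⁻¹ * y :=
    hasSum_le (fun k => mul_le_mul_of_nonneg_left (hy (k + 1)) (pow_nonneg hδ₂0 k)) hT
      ((hasSum_geometric_of_lt_one hδ₂0 hδ₂).mul_right y)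
  -- `(1 - δ₁) a k ≤ (E k - δ₂ E (k + 1)) + (δ₂ - δ₁) E (k + 1)`, and the first part sums to `E 0`
  have hST : (1 - δ₁) * S ≤ E 0 + (δ₂ - δ₁) * T := by
    refine hasSum_le (fun k => ?_)
      ((summable_pow_mul_of_abs_le hδ₂0 hδ₂ ha).hasSum.mul_left (1 - δ₁))
      ((hasSum_pow_mul_sub_mul_succ hδ₂0 hδ₂ hE).add (hT.mul_left (δ₂ - δ₁)))
    have := mul_le_mul_of_nonneg_left (hstep k) (pow_nonneg hδ₂0 k)
    linarith
  have hgap : 0 < 1 - δ₂ := sub_pos.2 hδ₂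
  have hTy' : (1 - δ₂) * T ≤ y := by rwa [le_inv_mul_iff₀ hgap] at hTy
  have h := mul_le_mul_of_nonneg_left hST hgap.le
  refine le_of_mul_le_mul_left (a := 1 - δ₁) ?_ (by linarith)
  nlinarith [hy 0]

end Discounting

/-- A countable lottery over `X`: the outcome `p.2 s` has weight `p.1 s`. -/
abbrev Lottery (X : Type*) := (ℕ → ℝ) × (ℕ → X)

namespace Lottery

variable {X Y : Type*}

def IsProb (p : Lottery X) : Prop := (∀ s, 0 ≤ p.1 s) ∧ ∑' s, p.1 s = 1

def expect (p : Lottery X) (f : X → ℝ) : ℝ := ∑' s, p.1 s * f (p.2 s)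

def pure (x : X) : Lottery X := (Pi.single 0 1, fun _ => x)

def bind (p : Lottery X) (q : X → Lottery Y) : Lottery Y :=
  (fun n => p.1 n.unpair.1 * (q (p.2 n.unpair.1)).1 n.unpair.2,
    fun n => (q (p.2 n.unpair.1)).2 n.unpair.2)

def map (f : X → Y) (p : Lottery X) : Lottery Y := (p.1, f ∘ p.2)

lemma expect_pure (x : X) (f : X → ℝ) : (pure x).expect f = f x := by
  simp only [expect, pure]
  rw [tsum_mul_right, tsum_pi_single, one_mul]

lemma isProb_pure (x : X) : (pure x).IsProb :=
  ⟨fun s => by by_cases hs : s = 0 <;> simp [pure, hs], tsum_pi_single 0 1⟩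

lemma expect_map (f : X → Y) (p : Lottery X) (g : Y → ℝ) :
    (p.map f).expect g = p.expect (g ∘ f) :=
  rfl

lemma expect_congr {p : Lottery X} {f g : X → ℝ} (hfg : ∀ s, f (p.2 s) = g (p.2 s)) :
    p.expect f = p.expect g :=
  tsum_congr fun s => by rw [hfg]

namespace IsProb

variable {p : Lottery X} {f g : X → ℝ} {B : ℝ}

lemma summable (hp : p.IsProb) : Summable p.1 := by
  by_contra h
  simpa [tsum_eq_zero_of_not_summable h] using hp.2

lemma summable_mul (hp : p.IsProb) (hf : ∀ s, f (p.2 s) ∈ Icc 0 B) :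
    Summable fun s => p.1 s * f (p.2 s) :=
  Summable.of_nonneg_of_le (fun s => mul_nonneg (hp.1 s) (hf s).1)
    (fun s => mul_le_mul_of_nonneg_left (hf s).2 (hp.1 s)) (hp.summable.mul_right B)

lemma expect_mem_Icc (hp : p.IsProb) (hf : ∀ s, f (p.2 s) ∈ Icc 0 B) :
    p.expect f ∈ Icc 0 B := by
  refine ⟨tsum_nonneg fun s => mul_nonneg (hp.1 s) (hf s).1, ?_⟩
  calc p.expect f ≤ ∑' s, p.1 s * B :=
        (hp.summable_mul hf).tsum_le_tsum (fun s => mul_le_mul_of_nonneg_left (hf s).2 (hp.1 s))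
          (hp.summable.mul_right B)
    _ = B := by rw [tsum_mul_right, hp.2, one_mul]

lemma expect_mono {B' : ℝ} (hp : p.IsProb) (hf : ∀ s, f (p.2 s) ∈ Icc 0 B)
    (hg : ∀ s, g (p.2 s) ∈ Icc 0 B') (hfg : ∀ s, f (p.2 s) ≤ g (p.2 s)) :
    p.expect f ≤ p.expect g :=
  (hp.summable_mul hf).tsum_le_tsum (fun s => mul_le_mul_of_nonneg_left (hfg s) (hp.1 s))
    (hp.summable_mul hg)

lemma expect_add_const (hp : p.IsProb) (hf : ∀ s, f (p.2 s) ∈ Icc 0 B) (c : ℝ) :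
    p.expect (fun x => f x + c) = p.expect f + c := by
  simp only [expect, mul_add]
  rw [(hp.summable_mul hf).tsum_add (hp.summable.mul_right c), tsum_mul_right, hp.2, one_mul]

lemma expect_mul_add_mul (hp : p.IsProb) (hf : ∀ s, f (p.2 s) ∈ Icc 0 B)
    (hg : ∀ s, g (p.2 s) ∈ Icc 0 B) (c d : ℝ) :
    p.expect (fun x => c * f x + d * g x) = c * p.expect f + d * p.expect g := by
  simp only [expect, mul_add, mul_left_comm (p.1 _)]
  rw [((hp.summable_mul hf).mul_left c).tsum_add ((hp.summable_mul hg).mul_left d),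
    tsum_mul_left, tsum_mul_left]

lemma expect_bind (hp : p.IsProb) {q : X → Lottery Y} (hq : ∀ s, (q (p.2 s)).IsProb)
    {f : Y → ℝ} (hf : ∀ s t, f ((q (p.2 s)).2 t) ∈ Icc 0 B) :
    (p.bind q).expect f = p.expect fun x => (q x).expect f := by
  let F : ℕ × ℕ → ℝ := fun st => p.1 st.1 * ((q (p.2 st.1)).1 st.2 * f ((q (p.2 st.1)).2 st.2))
  have hrow : ∀ s, Summable fun t => F (s, t) :=
    fun s => ((hq s).summable_mul (f := f) (hf s)).mul_left (p.1 s)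
  have hcol : Summable fun s => ∑' t, F (s, t) :=
    (hp.summable_mul (f := fun x => (q x).expect f)
      fun s => (hq s).expect_mem_Icc (f := f) (hf s)).congr fun s => tsum_mul_left.symm
  have hF : Summable F :=
    (summable_prod_of_nonneg fun st => mul_nonneg (hp.1 _) (mul_nonneg ((hq _).1 _) (hf _ _).1)).2
      ⟨hrow, hcol⟩
  calc (p.bind q).expect f = ∑' st, F st := by
        rw [← Nat.pairEquiv.symm.tsum_eq F]
        exact tsum_congr fun n => mul_assoc _ _ _
    _ = p.expect fun x => (q x).expect f := by
        rw [hF.tsum_prod' hrow]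
        exact tsum_congr fun s => by simp only [F, tsum_mul_left]; rfl

lemma bind (hp : p.IsProb) {q : X → Lottery Y} (hq : ∀ s, (q (p.2 s)).IsProb) :
    (p.bind q).IsProb := by
  refine ⟨fun n => mul_nonneg (hp.1 _) ((hq _).1 _), ?_⟩
  have h := hp.expect_bind hq (f := fun _ => 1) (B := 1) fun _ _ => ⟨zero_le_one, le_rfl⟩
  simpa [expect, (hq _).2, hp.2] using h

end IsProb

end Lottery

lemma IsStochastic.vecMul_mem_stdSimplex {K : Type*} [Fintype K] {M : Matrix K K ℝ}
    (hM : IsStochastic M) {ξ : K → ℝ} (hξ : ξ ∈ stdSimplex ℝ K) : ξ ᵥ* M ∈ stdSimplex ℝ K := by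
  classical
  have hM' : M ∈ rowStochastic ℝ K := mem_rowStochastic_iff_sum.2 hM
  refine ⟨nonneg_vecMul_of_mem_rowStochastic hM' hξ.1, ?_⟩
  simpa [dotProduct] using
    vecMul_dotProduct_one_eq_one_rowStochastic hM' (by simpa [dotProduct] using hξ.2)

namespace IsSplit

variable {K : Type*} [Fintype K] {ξ : K → ℝ} {p : Lottery (K → ℝ)}

lemma isProb (hp : IsSplit ξ p.1 p.2) : p.IsProb := ⟨hp.1, hp.2.2.1⟩

lemma expect_mem_Icc (hp : IsSplit ξ p.1 p.2) {f : (K → ℝ) → ℝ} {B : ℝ}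
    (hf : ∀ x ∈ stdSimplex ℝ K, f x ∈ Icc 0 B) : p.expect f ∈ Icc 0 B :=
  hp.isProb.expect_mem_Icc fun s => hf _ (hp.2.1 s)

lemma pure (hξ : ξ ∈ stdSimplex ℝ K) : IsSplit ξ (Lottery.pure ξ).1 (Lottery.pure ξ).2 :=
  ⟨(Lottery.isProb_pure ξ).1, fun _ => hξ, (Lottery.isProb_pure ξ).2,
    fun ℓ => Lottery.expect_pure ξ (· ℓ)⟩

lemma bind (hp : IsSplit ξ p.1 p.2) {q : (K → ℝ) → Lottery (K → ℝ)}
    (hq : ∀ s, IsSplit (p.2 s) (q (p.2 s)).1 (q (p.2 s)).2) :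
    IsSplit ξ (p.bind q).1 (p.bind q).2 := by
  have hbind := hp.isProb.bind fun s => (hq s).isProb
  refine ⟨hbind.1, fun n => (hq _).2.1 _, hbind.2, fun ℓ => ?_⟩
  calc (p.bind q).expect (· ℓ) = p.expect fun x => (q x).expect (· ℓ) :=
        hp.isProb.expect_bind (fun s => (hq s).isProb)
          (fun s t => mem_Icc_of_mem_stdSimplex ((hq s).2.1 t) ℓ)
    _ = p.expect (· ℓ) := Lottery.expect_congr fun s => (hq s).2.2.2 ℓ
    _ = ξ ℓ := hp.2.2.2 ℓ

lemma map_vecMul {M : Matrix K K ℝ} (hM : IsStochastic M) (hp : IsSplit ξ p.1 p.2) :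
    IsSplit (ξ ᵥ* M) (p.map (· ᵥ* M)).1 (p.map (· ᵥ* M)).2 := by
  refine ⟨hp.1, fun s => hM.vecMul_mem_stdSimplex (hp.2.1 s), hp.2.2.1, fun ℓ => ?_⟩
  have hprob : p.IsProb := hp.isProb
  have hcoord : ∀ j, Summable fun s => p.1 s * p.2 s j * M j ℓ := fun j => by
    have hj : ∀ s, p.2 s j ∈ Icc (0 : ℝ) 1 := fun s => mem_Icc_of_mem_stdSimplex (hp.2.1 s) j
    exact (hprob.summable_mul (f := fun x => x j) hj).mul_right (M j ℓ)
  calc ∑' s, p.1 s * (p.2 s ᵥ* M) ℓ = ∑' s, ∑ j, p.1 s * p.2 s j * M j ℓ :=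
        tsum_congr fun s => by simp only [vecMul, dotProduct, Finset.mul_sum, mul_assoc]
    _ = ∑ j, (∑' s, p.1 s * p.2 s j) * M j ℓ := by
        rw [Summable.tsum_finsetSum fun j _ => hcoord j]
        simp only [tsum_mul_right]
    _ = (ξ ᵥ* M) ℓ := by simp only [hp.2.2.2]; rfl

end IsSplit

namespace MarkovianPersuasion

variable {K : Type*} [Fintype K] {M : Matrix K K ℝ} {u : (K → ℝ) → ℝ} {C : ℝ}
  {v : ℝ → (K → ℝ) → ℝ} {δ ε : ℝ} {ξ : K → ℝ} {p : Lottery (K → ℝ)}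
  {σ : (K → ℝ) → Lottery (K → ℝ)}

/-- `splitPayoff M u δ w p.1 p.2` is, by definition, `p.expect (stagePayoff M u δ w)`. -/
def stagePayoff (M : Matrix K K ℝ) (u : (K → ℝ) → ℝ) (δ : ℝ) (w : (K → ℝ) → ℝ) (ξ : K → ℝ) :
    ℝ :=
  (1 - δ) * u ξ + δ * w (ξ ᵥ* M)

def IsStrategy (σ : (K → ℝ) → Lottery (K → ℝ)) : Prop :=
  ∀ ξ ∈ stdSimplex ℝ K, IsSplit ξ (σ ξ).1 (σ ξ).2

lemma stagePayoff_mem_Icc (hM : IsStochastic M) (hu : ∀ ξ ∈ stdSimplex ℝ K, u ξ ∈ Icc 0 C)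
    (hv : IsValueFamily M u C v) (hδ : δ ∈ Ico 0 1) (hξ : ξ ∈ stdSimplex ℝ K) :
    stagePayoff M u δ (v δ) ξ ∈ Icc 0 C := by
  obtain ⟨hu0, huC⟩ := hu ξ hξ
  obtain ⟨hv0, hvC⟩ := (hv δ hδ).1 _ (hM.vecMul_mem_stdSimplex hξ)
  constructor <;> unfold stagePayoff <;> nlinarith [hδ.1, hδ.2]

lemma expect_stagePayoff_le_value (hM : IsStochastic M)
    (hu : ∀ ξ ∈ stdSimplex ℝ K, u ξ ∈ Icc 0 C) (hv : IsValueFamily M u C v)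
    (hδ : δ ∈ Ico 0 1) (hξ : ξ ∈ stdSimplex ℝ K) (hp : IsSplit ξ p.1 p.2) :
    p.expect (stagePayoff M u δ (v δ)) ≤ v δ ξ := by
  rw [(hv δ hδ).2 ξ hξ]
  refine le_csSup ⟨C, ?_⟩ ⟨p.1, p.2, hp, rfl⟩
  rintro _ ⟨α, ξs, hsp, rfl⟩
  exact (IsSplit.expect_mem_Icc (p := (α, ξs)) hsp fun x hx =>
    stagePayoff_mem_Icc hM hu hv hδ hx).2

lemma exists_strategy_value_le_add (hv : IsValueFamily M u C v) (hδ : δ ∈ Ico 0 1)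
    (hε : 0 < ε) : ∃ σ : (K → ℝ) → Lottery (K → ℝ), IsStrategy σ ∧
      ∀ ξ ∈ stdSimplex ℝ K, v δ ξ ≤ (σ ξ).expect (stagePayoff M u δ (v δ)) + ε := by
  have hchoice : ∀ ξ, ∃ q : Lottery (K → ℝ), ξ ∈ stdSimplex ℝ K →
      IsSplit ξ q.1 q.2 ∧ v δ ξ ≤ q.expect (stagePayoff M u δ (v δ)) + ε := by
    intro ξ
    by_cases hξ : ξ ∈ stdSimplex ℝ K
    · have hlt := sub_lt_self (v δ ξ) hε
      rw [(hv δ hδ).2 ξ hξ] at hlt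
      obtain ⟨_, ⟨α, ξs, hsp, rfl⟩, hr⟩ :=
        exists_lt_of_lt_csSup (by exact ⟨_, _, _, IsSplit.pure hξ, rfl⟩) hlt
      exact ⟨(α, ξs), fun _ => ⟨hsp, by rw [(hv δ hδ).2 ξ hξ]; exact (sub_lt_iff_lt_add.1 hr).le⟩⟩
    · exact ⟨default, fun h => absurd h hξ⟩
  choose σ hσ using hchoice
  exact ⟨σ, fun ξ hξ => (hσ ξ hξ).1, fun ξ hξ => (hσ ξ hξ).2⟩

lemma expect_value_le_expect_add (hM : IsStochastic M)
    (hu : ∀ ξ ∈ stdSimplex ℝ K, u ξ ∈ Icc 0 C) (hv : IsValueFamily M u C v)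
    (hδ : δ ∈ Ico 0 1) (hε : 0 ≤ ε) (hσ : IsStrategy σ)
    (hσε : ∀ ξ ∈ stdSimplex ℝ K, v δ ξ ≤ (σ ξ).expect (stagePayoff M u δ (v δ)) + ε)
    (hp : IsSplit ξ p.1 p.2) :
    p.expect (v δ) ≤ p.expect (fun x => (σ x).expect (stagePayoff M u δ (v δ))) + ε := by
  have hsplit : ∀ x ∈ stdSimplex ℝ K, (σ x).expect (stagePayoff M u δ (v δ)) ∈ Icc 0 C :=
    fun x hx => (hσ x hx).expect_mem_Icc fun y hy => stagePayoff_mem_Icc hM hu hv hδ hy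
  rw [← hp.isProb.expect_add_const fun s => hsplit _ (hp.2.1 s)]
  exact hp.isProb.expect_mono (B' := C + ε) (fun s => (hv δ hδ).1 _ (hp.2.1 s))
    (fun s => ⟨by linarith [(hsplit _ (hp.2.1 s)).1], by linarith [(hsplit _ (hp.2.1 s)).2]⟩)
    fun s => hσε _ (hp.2.1 s)

lemma expect_value_le (hM : IsStochastic M) (hu : ∀ ξ ∈ stdSimplex ℝ K, u ξ ∈ Icc 0 C)
    (hv : IsValueFamily M u C v) (hδ : δ ∈ Ico 0 1) (hξ : ξ ∈ stdSimplex ℝ K)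
    (hp : IsSplit ξ p.1 p.2) : p.expect (v δ) ≤ v δ ξ := by
  refine le_of_forall_pos_le_add fun ε hε => ?_
  obtain ⟨σ, hσ, hσε⟩ := exists_strategy_value_le_add hv hδ hε
  have hq : ∀ s, IsSplit (p.2 s) (σ (p.2 s)).1 (σ (p.2 s)).2 := fun s => hσ _ (hp.2.1 s)
  calc p.expect (v δ) ≤ p.expect (fun x => (σ x).expect (stagePayoff M u δ (v δ))) + ε :=
        expect_value_le_expect_add hM hu hv hδ hε.le hσ hσε hp
    _ = (p.bind σ).expect (stagePayoff M u δ (v δ)) + ε := by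
        rw [hp.isProb.expect_bind (fun s => (hq s).isProb)
          fun s t => stagePayoff_mem_Icc hM hu hv hδ ((hq s).2.1 t)]
    _ ≤ v δ ξ + ε := by
        gcongr
        exact expect_stagePayoff_le_value hM hu hv hδ hξ (hp.bind hq)

/-- The law of the next prior when the sender splits the current prior according to `σ`
and the state then moves according to `M`. -/
def nextPriorLaw (M : Matrix K K ℝ) (σ : (K → ℝ) → Lottery (K → ℝ)) (p : Lottery (K → ℝ)) :
    Lottery (K → ℝ) :=
  (p.bind σ).map (· ᵥ* M)

def priorLaw (M : Matrix K K ℝ) (σ : (K → ℝ) → Lottery (K → ℝ)) (π : K → ℝ) (k : ℕ) :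
    Lottery (K → ℝ) :=
  (nextPriorLaw M σ)^[k] (Lottery.pure π)

lemma priorLaw_succ (M : Matrix K K ℝ) (σ : (K → ℝ) → Lottery (K → ℝ)) (π : K → ℝ) (k : ℕ) :
    priorLaw M σ π (k + 1) = nextPriorLaw M σ (priorLaw M σ π k) :=
  Function.iterate_succ_apply' _ _ _

lemma isSplit_nextPriorLaw (hM : IsStochastic M) (hσ : IsStrategy σ) (hp : IsSplit ξ p.1 p.2) :
    IsSplit (ξ ᵥ* M) (nextPriorLaw M σ p).1 (nextPriorLaw M σ p).2 :=
  (hp.bind fun s => hσ _ (hp.2.1 s)).map_vecMul hM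

lemma isSplit_priorLaw (hM : IsStochastic M) (hσ : IsStrategy σ) {π : K → ℝ}
    (hπ : π ∈ stdSimplex ℝ K) (hπinv : π ᵥ* M = π) (k : ℕ) :
    IsSplit π (priorLaw M σ π k).1 (priorLaw M σ π k).2 := by
  induction k with
  | zero => exact IsSplit.pure hπ
  | succ k ih =>
    rw [priorLaw_succ]
    simpa only [hπinv] using isSplit_nextPriorLaw hM hσ ih

lemma expect_expect_stagePayoff (hM : IsStochastic M)
    (hu : ∀ ξ ∈ stdSimplex ℝ K, u ξ ∈ Icc 0 C) (hv : IsValueFamily M u C v)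
    (hδ : δ ∈ Ico 0 1) (hσ : IsStrategy σ) (hp : IsSplit ξ p.1 p.2) :
    p.expect (fun x => (σ x).expect (stagePayoff M u δ (v δ))) =
      (1 - δ) * p.expect (fun x => (σ x).expect u) + δ * (nextPriorLaw M σ p).expect (v δ) := by
  have hq : ∀ s, IsSplit (p.2 s) (σ (p.2 s)).1 (σ (p.2 s)).2 := fun s => hσ _ (hp.2.1 s)
  have hu' : ∀ s t, u ((σ (p.2 s)).2 t) ∈ Icc 0 C := fun s t => hu _ ((hq s).2.1 t)
  have hv' : ∀ s t, v δ ((σ (p.2 s)).2 t ᵥ* M) ∈ Icc 0 C :=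
    fun s t => (hv δ hδ).1 _ (hM.vecMul_mem_stdSimplex ((hq s).2.1 t))
  rw [nextPriorLaw, Lottery.expect_map,
    hp.isProb.expect_bind (fun s => (hq s).isProb) (f := v δ ∘ (· ᵥ* M)) hv',
    ← hp.isProb.expect_mul_add_mul (fun s => (hq s).isProb.expect_mem_Icc (hu' s))
      (fun s => (hq s).isProb.expect_mem_Icc (f := v δ ∘ (· ᵥ* M)) (hv' s))]
  exact Lottery.expect_congr fun s =>
    (hq s).isProb.expect_mul_add_mul (hu' s) (g := v δ ∘ (· ᵥ* M)) (hv' s) _ _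

lemma expect_value_le_stage_add_next (hM : IsStochastic M)
    (hu : ∀ ξ ∈ stdSimplex ℝ K, u ξ ∈ Icc 0 C) (hv : IsValueFamily M u C v)
    (hδ : δ ∈ Ico 0 1) (hε : 0 ≤ ε) (hσ : IsStrategy σ)
    (hσε : ∀ ξ ∈ stdSimplex ℝ K, v δ ξ ≤ (σ ξ).expect (stagePayoff M u δ (v δ)) + ε)
    (hp : IsSplit ξ p.1 p.2) :
    p.expect (v δ) ≤
      (1 - δ) * p.expect (fun x => (σ x).expect u) + δ * (nextPriorLaw M σ p).expect (v δ) + ε := by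
  rw [← expect_expect_stagePayoff hM hu hv hδ hσ hp]
  exact expect_value_le_expect_add hM hu hv hδ hε hσ hσε hp

lemma stage_add_next_le_expect_value (hM : IsStochastic M)
    (hu : ∀ ξ ∈ stdSimplex ℝ K, u ξ ∈ Icc 0 C) (hv : IsValueFamily M u C v)
    (hδ : δ ∈ Ico 0 1) (hσ : IsStrategy σ) (hp : IsSplit ξ p.1 p.2) :
    (1 - δ) * p.expect (fun x => (σ x).expect u) + δ * (nextPriorLaw M σ p).expect (v δ) ≤
      p.expect (v δ) := by
  rw [← expect_expect_stagePayoff hM hu hv hδ hσ hp]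
  exact hp.isProb.expect_mono
    (fun s => (hσ _ (hp.2.1 s)).expect_mem_Icc fun x hx => stagePayoff_mem_Icc hM hu hv hδ hx)
    (fun s => (hv δ hδ).1 _ (hp.2.1 s))
    fun s => expect_stagePayoff_le_value hM hu hv hδ (hp.2.1 s) (hσ _ (hp.2.1 s))

end MarkovianPersuasion

open MarkovianPersuasion in
theorem markovian_persuasion_value_nonincreasing_at_invariant_general
    {K : Type*} [Fintype K]
    (M : Matrix K K ℝ) (hM : IsStochastic M)
    (u : (K → ℝ) → ℝ) (hu0 : ∀ ξ ∈ stdSimplex ℝ K, 0 ≤ u ξ)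
    (C : ℝ) (hC : IsLUB (u '' stdSimplex ℝ K) C)
    (v : ℝ → (K → ℝ) → ℝ) (hv : IsValueFamily M u C v)
    (π : K → ℝ) (hπ : π ∈ stdSimplex ℝ K) (hπinv : Matrix.vecMul π M = π) :
    ∀ δ₁ δ₂ : ℝ, 0 ≤ δ₁ → δ₁ ≤ δ₂ → δ₂ < 1 → v δ₂ π ≤ v δ₁ π := by
  intro δ₁ δ₂ hδ₁ h₁₂ hδ₂
  have hu : ∀ ξ ∈ stdSimplex ℝ K, u ξ ∈ Icc 0 C :=
    fun ξ hξ => ⟨hu0 ξ hξ, hC.1 (mem_image_of_mem u hξ)⟩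
  have hI₁ : δ₁ ∈ Ico (0 : ℝ) 1 := ⟨hδ₁, h₁₂.trans_lt hδ₂⟩
  have hI₂ : δ₂ ∈ Ico (0 : ℝ) 1 := ⟨hδ₁.trans h₁₂, hδ₂⟩
  have hgap : 0 < 1 - δ₂ := sub_pos.2 hδ₂
  refine le_of_forall_pos_le_add fun ε hε => ?_
  obtain ⟨σ, hσ, hσε⟩ := exists_strategy_value_le_add hv hI₂ (mul_pos hε hgap)
  have hlaw := isSplit_priorLaw hM hσ hπ hπinv
  set a : ℕ → ℝ := fun k => (priorLaw M σ π k).expect fun x => (σ x).expect u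
  set E : ℝ → ℕ → ℝ := fun d k => (priorLaw M σ π k).expect (v d)
  have ha : ∀ k, |a k| ≤ C := fun k =>
    have h := (hlaw k).expect_mem_Icc fun ξ hξ => (hσ ξ hξ).expect_mem_Icc hu
    (abs_of_nonneg h.1).trans_le h.2
  have hE : ∀ d ∈ Ico (0 : ℝ) 1, ∀ k, |E d k| ≤ C := fun d hd k =>
    have h := (hlaw k).expect_mem_Icc (hv d hd).1
    (abs_of_nonneg h.1).trans_le h.2
  have h₂ : ∀ k, E δ₂ k ≤ (1 - δ₂) * a k + δ₂ * E δ₂ (k + 1) + ε * (1 - δ₂) := fun k => by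
    simpa only [E, priorLaw_succ] using
      expect_value_le_stage_add_next hM hu hv hI₂ (mul_pos hε hgap).le hσ hσε (hlaw k)
  have h₁ : ∀ k, (1 - δ₁) * a k + δ₁ * E δ₁ (k + 1) ≤ E δ₁ k := fun k => by
    simpa only [E, priorLaw_succ] using stage_add_next_le_expect_value hM hu hv hI₁ hσ (hlaw k)
  calc v δ₂ π = E δ₂ 0 := (Lottery.expect_pure π _).symm
    _ ≤ (1 - δ₂) * ∑' k, δ₂ ^ k * a k + ε * (1 - δ₂) / (1 - δ₂) :=
        le_tsum_pow_mul_add_of_le hI₂.1 hδ₂ ha (hE δ₂ hI₂) h₂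
    _ ≤ v δ₁ π + ε := by
        rw [mul_div_cancel_right₀ _ hgap.ne']
        gcongr
        exact tsum_pow_mul_le_of_le hδ₁ h₁₂ hδ₂ ha (hE δ₁ hI₁) h₁
          fun k => expect_value_le hM hu hv hI₁ hπ (hlaw k)

theorem markovian_persuasion_value_nonincreasing_at_invariant
    {K : Type*} [Fintype K] [Nonempty K]
    (M : Matrix K K ℝ) (hM : IsStochastic M)
    (u : (K → ℝ) → ℝ) (hu0 : ∀ ξ ∈ stdSimplex ℝ K, 0 ≤ u ξ)
    (husc : UpperSemicontinuousOn u (stdSimplex ℝ K))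
    (C : ℝ) (hC : IsLUB (u '' stdSimplex ℝ K) C)
    (v : ℝ → (K → ℝ) → ℝ) (hv : IsValueFamily M u C v)
    (π : K → ℝ) (hπ : π ∈ stdSimplex ℝ K) (hπinv : Matrix.vecMul π M = π) :
    ∀ δ₁ δ₂ : ℝ, 0 ≤ δ₁ → δ₁ ≤ δ₂ → δ₂ < 1 → v δ₂ π ≤ v δ₁ π :=
  markovian_persuasion_value_nonincreasing_at_invariant_general M hM u hu0 C hC v hv π hπ hπinv
end
end

section
/- For every n ≥ 1, every ξ ∈ Δ(K) and every δ ∈ (0,1) it holds that |v_δ(ξ) − v_δ(ξM^n)| ≤ n·(1−δ)·‖u‖∞ / δ. -/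
open scoped BigOperators

noncomputable section

set_option linter.unusedSectionVars false
set_option linter.unusedVariables false
set_option maxHeartbeats 800000

lemma combine_tsum {α : ℕ → ℝ} {β : ℕ → ℕ → ℝ} (hα0 : ∀ s, 0 ≤ α s) (hαs : Summable α)
    (hβ0 : ∀ s j, 0 ≤ β s j) (hβs : ∀ s, Summable (β s)) (hβ1 : ∀ s, ∑' j, β s j = 1)
    {h : ℕ → ℕ → ℝ} {c : ℝ} (hh0 : ∀ s j, 0 ≤ h s j) (hhc : ∀ s j, h s j ≤ c) :
    ∑' p : ℕ × ℕ, α p.1 * (β p.1 p.2 * h p.1 p.2) = ∑' s, α s * ∑' j, β s j * h s j := by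
  set f : ℕ × ℕ → ℝ := fun p => α p.1 * (β p.1 p.2 * h p.1 p.2) with hf
  have hf0 : ∀ p, 0 ≤ f p := fun p =>
    mul_nonneg (hα0 _) (mul_nonneg (hβ0 _ _) (hh0 _ _))
  have hinner0 : ∀ s, Summable fun j => β s j * h s j := by
    intro s
    refine Summable.of_nonneg_of_le (fun j => mul_nonneg (hβ0 s j) (hh0 s j))
      (fun j => ?_) ((hβs s).mul_left c)
    calc β s j * h s j ≤ β s j * c := mul_le_mul_of_nonneg_left (hhc s j) (hβ0 s j)
    _ = c * β s j := mul_comm _ _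
  have hinner : ∀ s, Summable fun j => f (s, j) := fun s => (hinner0 s).mul_left (α s)
  have hinnerval : ∀ s, (∑' j, f (s, j)) = α s * ∑' j, β s j * h s j := by
    intro s
    simp only [hf]
    exact tsum_mul_left
  have hinnerle : ∀ s, (∑' j, β s j * h s j) ≤ c := by
    intro s
    calc (∑' j, β s j * h s j) ≤ ∑' j, c * β s j := by
          refine Summable.tsum_le_tsum (fun j => ?_) (hinner0 s) ((hβs s).mul_left c)
          calc β s j * h s j ≤ β s j * c := mul_le_mul_of_nonneg_left (hhc s j) (hβ0 s j)
          _ = c * β s j := mul_comm _ _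
    _ = c := by rw [tsum_mul_left, hβ1 s, mul_one]
  have houter : Summable fun s => ∑' j, f (s, j) := by
    refine Summable.of_nonneg_of_le (fun s => tsum_nonneg fun j => hf0 (s, j))
      (fun s => ?_) (hαs.mul_right c)
    rw [hinnerval s]
    exact mul_le_mul_of_nonneg_left (hinnerle s) (hα0 s)
  have hsf : Summable f := (summable_prod_of_nonneg hf0).mpr ⟨hinner, houter⟩
  rw [Summable.tsum_prod' hsf hinner]
  exact tsum_congr hinnerval

namespace MPaux
variable {K : Type*} [Fintype K] [Nonempty K] [DecidableEq K]

lemma coord_le_one {ξ : K → ℝ} (hξ : ξ ∈ stdSimplex ℝ K) (i : K) : ξ i ≤ 1 := by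
  calc ξ i ≤ ∑ j, ξ j := Finset.single_le_sum (fun j _ => hξ.1 j) (Finset.mem_univ i)
  _ = 1 := hξ.2

lemma vecMul_mem {M : Matrix K K ℝ} (hM : IsStochastic M) {ξ : K → ℝ}
    (hξ : ξ ∈ stdSimplex ℝ K) : Matrix.vecMul ξ M ∈ stdSimplex ℝ K := by
  have hcoord : ∀ j, Matrix.vecMul ξ M j = ∑ i, ξ i * M i j := by
    intro j; simp [Matrix.vecMul, dotProduct]
  constructor
  · intro j
    rw [hcoord]
    exact Finset.sum_nonneg fun i _ => mul_nonneg (hξ.1 i) (hM.1 i j)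
  · calc ∑ j, Matrix.vecMul ξ M j = ∑ j, ∑ i, ξ i * M i j := by simp [hcoord]
    _ = ∑ i, ξ i * ∑ j, M i j := by rw [Finset.sum_comm]; simp [Finset.mul_sum]
    _ = 1 := by simp only [hM.2, mul_one]; exact hξ.2

lemma summable_of_split {ξ : K → ℝ} {α : ℕ → ℝ} {ξs : ℕ → K → ℝ}
    (h : IsSplit ξ α ξs) : Summable α := by
  by_contra hns
  have := tsum_eq_zero_of_not_summable hns
  rw [h.2.2.1] at this
  norm_num at this

lemma simplex_nonempty : ∃ ξ : K → ℝ, ξ ∈ stdSimplex ℝ K := by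
  obtain ⟨i0⟩ := (inferInstance : Nonempty K)
  refine ⟨fun j => if j = i0 then 1 else 0, fun j => by positivity, by simp⟩

section env
variable (M : Matrix K K ℝ) (hM : IsStochastic M) (u : (K → ℝ) → ℝ)
    (hu0 : ∀ ξ ∈ stdSimplex ℝ K, 0 ≤ u ξ) (C : ℝ)
    (huC : ∀ ξ ∈ stdSimplex ℝ K, u ξ ≤ C)
    (δ : ℝ) (hδ0 : 0 ≤ δ) (hδ1 : δ < 1) (w : (K → ℝ) → ℝ)
    (hw : ∀ ξ ∈ stdSimplex ℝ K, 0 ≤ w ξ ∧ w ξ ≤ C)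
    (hbell : ∀ ξ ∈ stdSimplex ℝ K,
      w ξ = sSup {r | ∃ α ξs, IsSplit ξ α ξs ∧ r = splitPayoff M u δ w α ξs})

include hM hu0 huC hδ0 hδ1 hw

lemma C_nonneg : 0 ≤ C := by
  obtain ⟨ξ, hξ⟩ := simplex_nonempty (K := K)
  exact le_trans (hu0 ξ hξ) (huC ξ hξ)

lemma g_bounds {ξ : K → ℝ} (hξ : ξ ∈ stdSimplex ℝ K) :
    0 ≤ (1 - δ) * u ξ + δ * w (Matrix.vecMul ξ M) ∧
      (1 - δ) * u ξ + δ * w (Matrix.vecMul ξ M) ≤ C := by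
  have hmem := vecMul_mem hM hξ
  constructor
  · have := hu0 ξ hξ
    have := (hw _ hmem).1
    nlinarith
  · have h1 : (1 - δ) * u ξ ≤ (1 - δ) * C :=
      mul_le_mul_of_nonneg_left (huC ξ hξ) (by linarith)
    have h2 : δ * w (Matrix.vecMul ξ M) ≤ δ * C :=
      mul_le_mul_of_nonneg_left ((hw _ hmem).2) hδ0
    nlinarith

lemma payoff_summable {ξ : K → ℝ} {α : ℕ → ℝ} {ξs : ℕ → K → ℝ} (hsp : IsSplit ξ α ξs) :
    Summable fun s => α s * ((1 - δ) * u (ξs s) + δ * w (Matrix.vecMul (ξs s) M)) := by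
  refine Summable.of_nonneg_of_le
    (fun s => mul_nonneg (hsp.1 s) (g_bounds M hM u hu0 C huC δ hδ0 hδ1 w hw (hsp.2.1 s)).1)
    (fun s => mul_le_mul_of_nonneg_left
      (g_bounds M hM u hu0 C huC δ hδ0 hδ1 w hw (hsp.2.1 s)).2 (hsp.1 s))
    ((summable_of_split hsp).mul_right C)

lemma payoff_le_C {ξ : K → ℝ} {α : ℕ → ℝ} {ξs : ℕ → K → ℝ} (hsp : IsSplit ξ α ξs) :
    splitPayoff M u δ w α ξs ≤ C := by
  have hb := fun s => g_bounds M hM u hu0 C huC δ hδ0 hδ1 w hw (hsp.2.1 s)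
  calc splitPayoff M u δ w α ξs
      ≤ ∑' s, α s * C := Summable.tsum_le_tsum
        (fun s => mul_le_mul_of_nonneg_left (hb s).2 (hsp.1 s))
        (payoff_summable M hM u hu0 C huC δ hδ0 hδ1 w hw hsp)
        ((summable_of_split hsp).mul_right C)
    _ = C := by rw [tsum_mul_right, hsp.2.2.1, one_mul]

lemma payoff_nonneg {ξ : K → ℝ} {α : ℕ → ℝ} {ξs : ℕ → K → ℝ} (hsp : IsSplit ξ α ξs) :
    0 ≤ splitPayoff M u δ w α ξs :=
  tsum_nonneg fun s => mul_nonneg (hsp.1 s)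
    (g_bounds M hM u hu0 C huC δ hδ0 hδ1 w hw (hsp.2.1 s)).1

omit hM hu0 huC hδ0 hδ1 hw in
lemma trivial_split {ξ : K → ℝ} (hξ : ξ ∈ stdSimplex ℝ K) :
    IsSplit ξ (fun s => if s = 0 then (1:ℝ) else 0) (fun _ => ξ) := by
  refine ⟨fun s => by positivity, fun _ => hξ, by rw [tsum_ite_eq], fun ℓ => ?_⟩
  have : (fun s : ℕ => (if s = 0 then (1:ℝ) else 0) * ξ ℓ)
      = fun s : ℕ => if s = 0 then ξ ℓ else 0 := by
    funext s; split <;> simp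
  rw [this, tsum_ite_eq]

omit hM hu0 huC hδ0 hδ1 hw in
lemma trivial_payoff {ξ : K → ℝ} :
    splitPayoff M u δ w (fun s => if s = 0 then (1:ℝ) else 0) (fun _ => ξ) =
      (1 - δ) * u ξ + δ * w (Matrix.vecMul ξ M) := by
  unfold splitPayoff
  have : (fun s : ℕ => (if s = 0 then (1:ℝ) else 0) *
      ((1 - δ) * u ξ + δ * w (Matrix.vecMul ξ M)))
      = fun s : ℕ => if s = 0 then ((1 - δ) * u ξ + δ * w (Matrix.vecMul ξ M)) else 0 := by
    funext s; split <;> simp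
  rw [this, tsum_ite_eq]

include hbell

lemma w_ge_payoff {ξ : K → ℝ} (hξ : ξ ∈ stdSimplex ℝ K) {α : ℕ → ℝ} {ξs : ℕ → K → ℝ}
    (hsp : IsSplit ξ α ξs) : splitPayoff M u δ w α ξs ≤ w ξ := by
  rw [hbell ξ hξ]
  refine le_csSup ⟨C, ?_⟩ ⟨α, ξs, hsp, rfl⟩
  rintro r ⟨α', ξs', hsp', rfl⟩
  exact payoff_le_C M hM u hu0 C huC δ hδ0 hδ1 w hw hsp'

lemma w_ge_step {ξ : K → ℝ} (hξ : ξ ∈ stdSimplex ℝ K) :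
    (1 - δ) * u ξ + δ * w (Matrix.vecMul ξ M) ≤ w ξ := by
  have := w_ge_payoff M hM u hu0 C huC δ hδ0 hδ1 w hw hbell hξ (trivial_split hξ)
  rwa [trivial_payoff] at this

lemma concavity {η : K → ℝ} (hη : η ∈ stdSimplex ℝ K) {α : ℕ → ℝ} {ηs : ℕ → K → ℝ}
    (hsp : IsSplit η α ηs) : (∑' s, α s * w (ηs s)) ≤ w η := by
  refine le_of_forall_pos_le_add fun ε hε => ?_
  have hCnn := C_nonneg (M := M) hM u hu0 C huC δ hδ0 hδ1 w hw
  have hchoice : ∀ s, ∃ β ζ, IsSplit (ηs s) β ζ ∧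
      w (ηs s) - ε < splitPayoff M u δ w β ζ := by
    intro s
    have hmem := hsp.2.1 s
    have hne : {r | ∃ β ζ, IsSplit (ηs s) β ζ ∧ r = splitPayoff M u δ w β ζ}.Nonempty :=
      ⟨_, _, _, trivial_split hmem, rfl⟩
    have hlt : w (ηs s) - ε <
        sSup {r | ∃ β ζ, IsSplit (ηs s) β ζ ∧ r = splitPayoff M u δ w β ζ} := by
      rw [← hbell _ hmem]; linarith
    obtain ⟨r, ⟨β, ζ, hβζ, rfl⟩, hr⟩ := exists_lt_of_lt_csSup hne hlt
    exact ⟨β, ζ, hβζ, hr⟩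
  choose β ζ hβζ hgt using hchoice
  have hα0 := hsp.1
  have hαs := summable_of_split hsp
  have hβ0 : ∀ s j, 0 ≤ β s j := fun s => (hβζ s).1
  have hβs : ∀ s, Summable (β s) := fun s => summable_of_split (hβζ s)
  have hβ1 : ∀ s, (∑' j, β s j) = 1 := fun s => (hβζ s).2.2.1
  have hζmem : ∀ s j, ζ s j ∈ stdSimplex ℝ K := fun s => (hβζ s).2.1
  set e : ℕ ≃ ℕ × ℕ := (Denumerable.eqv (ℕ × ℕ)).symm with he
  set γ : ℕ → ℝ := fun t => α (e t).1 * β (e t).1 (e t).2 with hγ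
  set ζ' : ℕ → K → ℝ := fun t => ζ (e t).1 (e t).2 with hζ'
  have hgb := fun s j => g_bounds M hM u hu0 C huC δ hδ0 hδ1 w hw (hζmem s j)
  -- the combined family is a split of η
  have hsplit : IsSplit η γ ζ' := by
    refine ⟨fun t => mul_nonneg (hα0 _) (hβ0 _ _), fun t => hζmem _ _, ?_, fun ℓ => ?_⟩
    · have h1 : (∑' t, γ t) = ∑' p : ℕ × ℕ, α p.1 * (β p.1 p.2 * 1) := by
        rw [← Equiv.tsum_eq e (fun p : ℕ × ℕ => α p.1 * (β p.1 p.2 * 1))]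
        exact tsum_congr fun t => by simp [hγ, mul_assoc]
      rw [h1, combine_tsum hα0 hαs hβ0 hβs hβ1 (fun _ _ => zero_le_one)
        (fun _ _ => le_refl (1:ℝ))]
      calc (∑' s, α s * ∑' j, β s j * 1) = ∑' s, α s := by
            refine tsum_congr fun s => ?_
            simp [hβ1 s]
        _ = 1 := hsp.2.2.1
    · have h1 : (∑' t, γ t * ζ' t ℓ) = ∑' p : ℕ × ℕ, α p.1 * (β p.1 p.2 * ζ p.1 p.2 ℓ) := by
        rw [← Equiv.tsum_eq e (fun p : ℕ × ℕ => α p.1 * (β p.1 p.2 * ζ p.1 p.2 ℓ))]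
        exact tsum_congr fun t => by simp [hγ, hζ', mul_assoc]
      rw [h1, combine_tsum hα0 hαs hβ0 hβs hβ1 (fun s j => (hζmem s j).1 ℓ)
        (fun s j => coord_le_one (hζmem s j) ℓ)]
      calc (∑' s, α s * ∑' j, β s j * ζ s j ℓ) = ∑' s, α s * ηs s ℓ := by
            exact tsum_congr fun s => by rw [(hβζ s).2.2.2 ℓ]
        _ = η ℓ := hsp.2.2.2 ℓ
  -- the payoff of the combined split
  have hpay : splitPayoff M u δ w γ ζ' =
      ∑' s, α s * splitPayoff M u δ w (β s) (ζ s) := by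
    unfold splitPayoff
    have h1 : (∑' t, γ t * ((1 - δ) * u (ζ' t) + δ * w (Matrix.vecMul (ζ' t) M)))
        = ∑' p : ℕ × ℕ, α p.1 * (β p.1 p.2 *
            ((1 - δ) * u (ζ p.1 p.2) + δ * w (Matrix.vecMul (ζ p.1 p.2) M))) := by
      rw [← Equiv.tsum_eq e (fun p : ℕ × ℕ => α p.1 * (β p.1 p.2 *
            ((1 - δ) * u (ζ p.1 p.2) + δ * w (Matrix.vecMul (ζ p.1 p.2) M))))]
      exact tsum_congr fun t => by simp [hγ, hζ', mul_assoc]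
    rw [h1, combine_tsum hα0 hαs hβ0 hβs hβ1 (fun s j => (hgb s j).1)
      (fun s j => (hgb s j).2)]
  -- lower bound the payoff
  have hsum_w : Summable fun s => α s * w (ηs s) := by
    refine Summable.of_nonneg_of_le
      (fun s => mul_nonneg (hα0 s) (hw _ (hsp.2.1 s)).1)
      (fun s => mul_le_mul_of_nonneg_left (hw _ (hsp.2.1 s)).2 (hα0 s))
      (hαs.mul_right C)
  have hsum_lhs : Summable fun s => α s * (w (ηs s) - ε) := by
    have : (fun s => α s * (w (ηs s) - ε)) = fun s => α s * w (ηs s) - α s * ε := by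
      funext s; ring
    rw [this]
    exact hsum_w.sub (hαs.mul_right ε)
  have hsum_rhs : Summable fun s => α s * splitPayoff M u δ w (β s) (ζ s) := by
    refine Summable.of_nonneg_of_le
      (fun s => mul_nonneg (hα0 s)
        (payoff_nonneg M hM u hu0 C huC δ hδ0 hδ1 w hw (hβζ s)))
      (fun s => mul_le_mul_of_nonneg_left
        (payoff_le_C M hM u hu0 C huC δ hδ0 hδ1 w hw (hβζ s)) (hα0 s))
      (hαs.mul_right C)
  have hstep : (∑' s, α s * (w (ηs s) - ε)) ≤ splitPayoff M u δ w γ ζ' := by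
    rw [hpay]
    refine Summable.tsum_le_tsum (fun s => ?_) hsum_lhs hsum_rhs
    exact mul_le_mul_of_nonneg_left (le_of_lt (hgt s)) (hα0 s)
  have hval : (∑' s, α s * (w (ηs s) - ε)) = (∑' s, α s * w (ηs s)) - ε := by
    have h2 : (fun s => α s * (w (ηs s) - ε)) = fun s => α s * w (ηs s) - α s * ε := by
      funext s; ring
    rw [h2, Summable.tsum_sub hsum_w (hαs.mul_right ε), tsum_mul_right, hsp.2.2.1, one_mul]
  have hfin := w_ge_payoff M hM u hu0 C huC δ hδ0 hδ1 w hw hbell hη hsplit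
  linarith [hstep, hval, hfin]

lemma split_vecMul {ξ : K → ℝ} {α : ℕ → ℝ} {ξs : ℕ → K → ℝ} (hsp : IsSplit ξ α ξs) :
    IsSplit (Matrix.vecMul ξ M) α (fun s => Matrix.vecMul (ξs s) M) := by
  refine ⟨hsp.1, fun s => vecMul_mem hM (hsp.2.1 s), hsp.2.2.1, fun ℓ => ?_⟩
  have hαs := summable_of_split hsp
  have hcoord : ∀ ρ : K → ℝ, Matrix.vecMul ρ M ℓ = ∑ i, ρ i * M i ℓ := fun ρ => by
    simp [Matrix.vecMul, dotProduct]
  have hsum_i : ∀ i : K, Summable fun s => α s * ξs s i := by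
    intro i
    refine Summable.of_nonneg_of_le (fun s => mul_nonneg (hsp.1 s) ((hsp.2.1 s).1 i))
      (fun s => ?_) hαs
    have h1 := coord_le_one (hsp.2.1 s) i
    have h2 := hsp.1 s
    nlinarith
  calc (∑' s, α s * Matrix.vecMul (ξs s) M ℓ)
      = ∑' s, ∑ i, α s * ξs s i * M i ℓ := by
        refine tsum_congr fun s => ?_
        rw [hcoord, Finset.mul_sum]
        exact Finset.sum_congr rfl fun i _ => by ring
    _ = ∑ i, ∑' s, α s * ξs s i * M i ℓ :=
        Summable.tsum_finsetSum fun i _ => (hsum_i i).mul_right _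
    _ = ∑ i, (∑' s, α s * ξs s i) * M i ℓ :=
        Finset.sum_congr rfl fun i _ => tsum_mul_right
    _ = ∑ i, ξ i * M i ℓ := Finset.sum_congr rfl fun i _ => by rw [hsp.2.2.2 i]
    _ = Matrix.vecMul ξ M ℓ := (hcoord ξ).symm

lemma w_le_step {ξ : K → ℝ} (hξ : ξ ∈ stdSimplex ℝ K) :
    w ξ ≤ (1 - δ) * C + δ * w (Matrix.vecMul ξ M) := by
  rw [hbell ξ hξ]
  refine csSup_le ⟨_, _, _, trivial_split hξ, rfl⟩ ?_
  rintro r ⟨α, ξs, hsp, rfl⟩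
  have hαs := summable_of_split hsp
  have hsumu : Summable fun s => α s * u (ξs s) := by
    refine Summable.of_nonneg_of_le
      (fun s => mul_nonneg (hsp.1 s) (hu0 _ (hsp.2.1 s)))
      (fun s => mul_le_mul_of_nonneg_left (huC _ (hsp.2.1 s)) (hsp.1 s))
      (hαs.mul_right C)
  have hsumw : Summable fun s => α s * w (Matrix.vecMul (ξs s) M) := by
    refine Summable.of_nonneg_of_le
      (fun s => mul_nonneg (hsp.1 s) (hw _ (vecMul_mem hM (hsp.2.1 s))).1)
      (fun s => mul_le_mul_of_nonneg_left (hw _ (vecMul_mem hM (hsp.2.1 s))).2 (hsp.1 s))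
      (hαs.mul_right C)
  have hconc := concavity M hM u hu0 C huC δ hδ0 hδ1 w hw hbell
    (vecMul_mem hM hξ) (split_vecMul M hM u hu0 C huC δ hδ0 hδ1 w hw hbell hsp)
  have hu_le : (∑' s, α s * u (ξs s)) ≤ C := by
    calc (∑' s, α s * u (ξs s)) ≤ ∑' s, α s * C :=
          Summable.tsum_le_tsum (fun s => mul_le_mul_of_nonneg_left
            (huC _ (hsp.2.1 s)) (hsp.1 s)) hsumu (hαs.mul_right C)
      _ = C := by rw [tsum_mul_right, hsp.2.2.1, one_mul]
  have hpay_eq : splitPayoff M u δ w α ξs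
      = (1 - δ) * (∑' s, α s * u (ξs s))
        + δ * ∑' s, α s * w (Matrix.vecMul (ξs s) M) := by
    unfold splitPayoff
    rw [← tsum_mul_left, ← tsum_mul_left,
      ← Summable.tsum_add (hsumu.mul_left (1 - δ)) (hsumw.mul_left δ)]
    exact tsum_congr fun s => by ring
  rw [hpay_eq]
  exact add_le_add (mul_le_mul_of_nonneg_left hu_le (by linarith))
    (mul_le_mul_of_nonneg_left hconc hδ0)

lemma one_step (hδp : 0 < δ) {ξ : K → ℝ} (hξ : ξ ∈ stdSimplex ℝ K) :
    |w ξ - w (Matrix.vecMul ξ M)| ≤ (1 - δ) * C / δ := by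
  have hmem := vecMul_mem hM hξ
  have h1 := w_ge_step M hM u hu0 C huC δ hδ0 hδ1 w hw hbell hξ
  have h2 := w_le_step M hM u hu0 C huC δ hδ0 hδ1 w hw hbell hξ
  have hu := hu0 ξ hξ
  have hwm := hw _ hmem
  have hCnn := C_nonneg (M := M) hM u hu0 C huC δ hδ0 hδ1 w hw
  have hkey : (1 - δ) * C ≤ (1 - δ) * C / δ := by
    rw [le_div_iff₀ hδp]
    nlinarith [mul_nonneg (mul_nonneg (sub_nonneg.2 hδ1.le) hCnn) (sub_nonneg.2 hδ1.le)]
  rw [abs_sub_le_iff]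
  constructor
  · -- w ξ - w (ξM) ≤ (1-δ)C + (δ-1) w(ξM) ≤ (1-δ)C
    have : w ξ - w (Matrix.vecMul ξ M) ≤ (1 - δ) * C := by nlinarith [hwm.1]
    linarith
  · -- w(ξM) - w ξ ≤ (1-δ) w(ξM) ≤ (1-δ)C
    have hge : δ * w (Matrix.vecMul ξ M) ≤ w ξ := by nlinarith
    have : w (Matrix.vecMul ξ M) - w ξ ≤ (1 - δ) * C := by nlinarith [hwm.2]
    linarith

omit hM hu0 huC hδ0 hδ1 hw hbell in
lemma vecMul_pow_mem (hM : IsStochastic M) {ξ : K → ℝ} (hξ : ξ ∈ stdSimplex ℝ K) :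
    ∀ n : ℕ, Matrix.vecMul ξ (M ^ n) ∈ stdSimplex ℝ K := by
  intro n
  induction n with
  | zero => simpa [Matrix.vecMul_one] using hξ
  | succ n ih =>
      rw [pow_succ, ← Matrix.vecMul_vecMul]
      exact vecMul_mem hM ih

end env
end MPaux


theorem markovian_persuasion_n_step_shift_bound
    {K : Type*} [Fintype K] [Nonempty K] [DecidableEq K]
    (M : Matrix K K ℝ) (hM : IsStochastic M)
    (u : (K → ℝ) → ℝ) (hu0 : ∀ ξ ∈ stdSimplex ℝ K, 0 ≤ u ξ)
    (husc : UpperSemicontinuousOn u (stdSimplex ℝ K))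
    (C : ℝ) (hC : IsLUB (u '' stdSimplex ℝ K) C)
    (v : ℝ → (K → ℝ) → ℝ) (hv : IsValueFamily M u C v) :
    ∀ n : ℕ, 1 ≤ n → ∀ ξ ∈ stdSimplex ℝ K, ∀ δ : ℝ, 0 < δ → δ < 1 →
      |v δ ξ - v δ (Matrix.vecMul ξ (M ^ n))| ≤ (n : ℝ) * (1 - δ) * C / δ := by
  intro n hn ξ hξ δ hδ0 hδ1
  obtain ⟨hbd, hbell⟩ := hv δ ⟨hδ0.le, hδ1⟩
  have huC : ∀ ρ ∈ stdSimplex ℝ K, u ρ ≤ C := fun ρ hρ => hC.1 ⟨ρ, hρ, rfl⟩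
  have hone : ∀ ρ ∈ stdSimplex ℝ K,
      |v δ ρ - v δ (Matrix.vecMul ρ M)| ≤ (1 - δ) * C / δ := fun ρ hρ =>
    MPaux.one_step M hM u hu0 C huC δ hδ0.le hδ1 (v δ) hbd hbell hδ0 hρ
  clear hn
  induction n with
  | zero =>
      simp only [pow_zero, Matrix.vecMul_one, sub_self, abs_zero, Nat.cast_zero,
        zero_mul, zero_div]
      exact le_rfl
  | succ n ih =>
      have hmemn := MPaux.vecMul_pow_mem M hM hξ n
      have h2 := hone _ hmemn
      rw [pow_succ, ← Matrix.vecMul_vecMul]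
      calc |v δ ξ - v δ (Matrix.vecMul (Matrix.vecMul ξ (M ^ n)) M)|
          ≤ |v δ ξ - v δ (Matrix.vecMul ξ (M ^ n))|
            + |v δ (Matrix.vecMul ξ (M ^ n))
              - v δ (Matrix.vecMul (Matrix.vecMul ξ (M ^ n)) M)| := abs_sub_le _ _ _
        _ ≤ (n : ℝ) * (1 - δ) * C / δ + (1 - δ) * C / δ := add_le_add ih h2
        _ = ((n : ℕ) + 1 : ℝ) * (1 - δ) * C / δ := by ring
        _ = ((n + 1 : ℕ) : ℝ) * (1 - δ) * C / δ := by push_cast; ring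
end
end

section
/- Assume M is ergodic with unique invariant distribution π_M and set c_* := min_{ℓ∈K} π_M^ℓ. Then there exists a constant C > 0 such that for every δ with 1 − c_*/2 < δ < 1 one has sup_{ξ ∈ Δ(K)} |v_δ(ξ) − v_δ(π_M)| ≤ C·(1−δ)·log₂(1/(1−δ)). -/
/-!
Comparing an arbitrary split with the trivial one in the Bellman equation gives
`δ v(ξM) ≤ v(ξ) ≤ (1 - δ)‖u‖ + δ v(ξM)`, once one knows that `v` is concave on `Δ(K)` (compose
near-optimal splits of the posteriors). So `v` moves by at most `(1 - δ)‖u‖` per step of the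
chain, and by `n (1 - δ)‖u‖` along `ξ, ξM, …, ξMⁿ`. By Doeblin's contraction, `ξMⁿ` is within
`(1 - δ)/2` of `π_M` for some `n = O(log₂(1/(1 - δ)))`. Finally, near the interior point `π_M`
concavity and boundedness make `v` Lipschitz with constant `O(‖u‖/c_*)`: a belief `q ≥ c` is a
mixture of any `p` with `|p - q| ≤ d` and some other belief, `p` having weight `c/(c + d)`.
-/

open scoped BigOperators

noncomputable section

open Finset Matrix

section Development

variable {K : Type*} [Fintype K]

lemma nonempty_of_mem_stdSimplex {π : K → ℝ} (hπ : π ∈ stdSimplex ℝ K) : Nonempty K :=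
  Finset.univ_nonempty_iff.1 (Finset.nonempty_of_sum_ne_zero (hπ.2.symm ▸ one_ne_zero))

namespace IsStochastic

variable {P Q : Matrix K K ℝ}

lemma sum_vecMul (hP : IsStochastic P) (w : K → ℝ) : ∑ j, vecMul w P j = ∑ i, w i := by
  simp only [vecMul, dotProduct]
  rw [Finset.sum_comm]
  simp only [← Finset.mul_sum, hP.2, mul_one]

lemma vecMul_mem_stdSimplex_s7 (hP : IsStochastic P) {ξ : K → ℝ} (hξ : ξ ∈ stdSimplex ℝ K) :
    vecMul ξ P ∈ stdSimplex ℝ K :=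
  ⟨fun j => Finset.sum_nonneg fun i _ => mul_nonneg (hξ.1 i) (hP.1 i j),
    (hP.sum_vecMul ξ).trans hξ.2⟩

lemma mul (hP : IsStochastic P) (hQ : IsStochastic Q) : IsStochastic (P * Q) :=
  ⟨fun i j => Finset.sum_nonneg fun l _ => mul_nonneg (hP.1 i l) (hQ.1 l j),
    fun i => (hQ.sum_vecMul (P i)).trans (hP.2 i)⟩

lemma one [DecidableEq K] : IsStochastic (1 : Matrix K K ℝ) :=
  ⟨fun i j => by by_cases h : i = j <;> simp [Matrix.one_apply, h], fun i => by
    simp [Matrix.one_apply]⟩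

lemma pow [DecidableEq K] (hP : IsStochastic P) (n : ℕ) : IsStochastic (P ^ n) := by
  induction n with
  | zero => exact one
  | succ n ih => rw [pow_succ]; exact ih.mul hP

lemma card_mul_le_one [Nonempty K] (hP : IsStochastic P) {ε : ℝ} (hε : ∀ i j, ε ≤ P i j) :
    Fintype.card K * ε ≤ 1 := by
  obtain ⟨i⟩ := ‹Nonempty K›
  calc Fintype.card K * ε = ∑ _j : K, ε := by simp
    _ ≤ ∑ j, P i j := Finset.sum_le_sum fun j _ => hε i j
    _ = 1 := hP.2 i

lemma sum_abs_vecMul_le (hP : IsStochastic P) {ε : ℝ} (hε : ∀ i j, ε ≤ P i j) {w : K → ℝ}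
    (hw : ∑ i, w i = 0) :
    ∑ j, |vecMul w P j| ≤ (1 - Fintype.card K * ε) * ∑ i, |w i| := by
  -- as `w` has mass zero, lowering every entry of `P` by `ε` does not change `w P`
  have hshift : ∀ j, vecMul w P j = ∑ i, w i * (P i j - ε) := fun j => by
    simp only [vecMul, dotProduct, mul_sub, Finset.sum_sub_distrib, ← Finset.sum_mul, hw,
      zero_mul, sub_zero]
  calc ∑ j, |vecMul w P j| ≤ ∑ j, ∑ i, |w i| * (P i j - ε) := by
        refine Finset.sum_le_sum fun j _ => ?_
        rw [hshift]
        refine (Finset.abs_sum_le_sum_abs _ _).trans_eq (Finset.sum_congr rfl fun i _ => ?_)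
        rw [abs_mul, abs_of_nonneg (sub_nonneg.2 (hε i j))]
    _ = ∑ i, |w i| * (1 - Fintype.card K * ε) := by
        rw [Finset.sum_comm]
        refine Finset.sum_congr rfl fun i _ => ?_
        simp [← Finset.mul_sum, Finset.sum_sub_distrib, hP.2 i]
    _ = (1 - Fintype.card K * ε) * ∑ i, |w i| := by rw [← Finset.sum_mul, mul_comm]

lemma sum_abs_vecMul_pow_sub_le [DecidableEq K] (hP : IsStochastic P) {ε : ℝ}
    (hε : ∀ i j, ε ≤ P i j) {π : K → ℝ} (hπ : π ∈ stdSimplex ℝ K) (hπP : vecMul π P = π)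
    {ξ : K → ℝ} (hξ : ξ ∈ stdSimplex ℝ K) (m : ℕ) :
    ∑ j, |vecMul ξ (P ^ m) j - π j| ≤ 2 * (1 - Fintype.card K * ε) ^ m := by
  have := nonempty_of_mem_stdSimplex hπ
  induction m with
  | zero =>
    calc ∑ j, |vecMul ξ (P ^ 0) j - π j| ≤ ∑ j, (ξ j + π j) := by
          refine Finset.sum_le_sum fun j _ => ?_
          rw [pow_zero, vecMul_one]
          exact abs_le.2 ⟨by linarith [hξ.1 j], by linarith [hπ.1 j]⟩
      _ = 2 * (1 - Fintype.card K * ε) ^ 0 := by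
          rw [Finset.sum_add_distrib, hξ.2, hπ.2]; norm_num
  | succ m ih =>
    have hw : ∑ i, (vecMul ξ (P ^ m) - π) i = 0 := by
      simp only [Pi.sub_apply, Finset.sum_sub_distrib, (hP.pow m).sum_vecMul, hξ.2, hπ.2,
        sub_self]
    have hstep : vecMul ξ (P ^ (m + 1)) - π = vecMul (vecMul ξ (P ^ m) - π) P := by
      rw [sub_vecMul, hπP, vecMul_vecMul, ← pow_succ]
    calc ∑ j, |vecMul ξ (P ^ (m + 1)) j - π j|
        = ∑ j, |vecMul (vecMul ξ (P ^ m) - π) P j| := by simp only [← hstep, Pi.sub_apply]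
      _ ≤ (1 - Fintype.card K * ε) * ∑ i, |vecMul ξ (P ^ m) i - π i| :=
          hP.sum_abs_vecMul_le hε hw
      _ ≤ (1 - Fintype.card K * ε) * (2 * (1 - Fintype.card K * ε) ^ m) :=
          mul_le_mul_of_nonneg_left ih (sub_nonneg.2 (hP.card_mul_le_one hε))
      _ = 2 * (1 - Fintype.card K * ε) ^ (m + 1) := by ring

end IsStochastic

lemma vecMul_pow_eq_self [DecidableEq K] {P : Matrix K K ℝ} {π : K → ℝ} (hπP : vecMul π P = π)
    (n : ℕ) : vecMul π (P ^ n) = π := by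
  induction n with
  | zero => rw [pow_zero, vecMul_one]
  | succ n ih => rw [pow_succ, ← vecMul_vecMul, ih, hπP]

lemma IsStochastic.exists_sum_abs_vecMul_pow_sub_le [DecidableEq K] {M : Matrix K K ℝ}
    (hM : IsStochastic M) (herg : ∃ N : ℕ, ∀ i j, 0 < (M ^ N) i j) {π : K → ℝ}
    (hπ : π ∈ stdSimplex ℝ K) (hπM : vecMul π M = π) :
    ∃ T : ℕ, ∀ ξ ∈ stdSimplex ℝ K, ∀ j : ℕ,
      ∑ ℓ, |vecMul ξ (M ^ (T * j)) ℓ - π ℓ| ≤ 2 * (1 / 2) ^ j := by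
  obtain ⟨N, hN⟩ := herg
  have := nonempty_of_mem_stdSimplex hπ
  obtain ⟨⟨i₀, j₀⟩, hmin⟩ := Finite.exists_min fun p : K × K => (M ^ N) p.1 p.2
  set ε := (M ^ N) i₀ j₀
  have hε : ∀ i j, ε ≤ (M ^ N) i j := fun i j => hmin (i, j)
  set θ := 1 - Fintype.card K * ε
  have hθ : θ < 1 := by
    have : (0 : ℝ) < Fintype.card K := by exact_mod_cast Fintype.card_pos
    nlinarith [hN i₀ j₀]
  have hθ0 : 0 ≤ θ := sub_nonneg.2 ((hM.pow N).card_mul_le_one hε)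
  obtain ⟨m, hm⟩ := exists_pow_lt_of_lt_one (by norm_num : (0 : ℝ) < 1 / 2) hθ
  refine ⟨N * m, fun ξ hξ j => ?_⟩
  calc ∑ ℓ, |vecMul ξ (M ^ (N * m * j)) ℓ - π ℓ| ≤ 2 * θ ^ (m * j) := by
        rw [mul_assoc, pow_mul]
        exact (hM.pow N).sum_abs_vecMul_pow_sub_le hε hπ (vecMul_pow_eq_self hπM N) hξ _
    _ ≤ 2 * (1 / 2) ^ j := by
        rw [pow_mul]
        gcongr

section Split

variable {ξ : K → ℝ} {α : ℕ → ℝ} {ξs : ℕ → K → ℝ}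

lemma IsSplit.summable (hsp : IsSplit ξ α ξs) : Summable α := by
  by_contra h
  exact zero_ne_one ((tsum_eq_zero_of_not_summable h).symm.trans hsp.2.2.1)

lemma IsSplit.summable_mul (hsp : IsSplit ξ α ξs) {f : ℕ → ℝ} {B : ℝ} (hf0 : ∀ s, 0 ≤ f s)
    (hfB : ∀ s, f s ≤ B) : Summable fun s => α s * f s :=
  Summable.of_nonneg_of_le (fun s => mul_nonneg (hsp.1 s) (hf0 s))
    (fun s => mul_le_mul_of_nonneg_left (hfB s) (hsp.1 s)) (hsp.summable.mul_right B)

lemma IsSplit.tsum_mul_le (hsp : IsSplit ξ α ξs) {f : ℕ → ℝ} {B : ℝ} (hf0 : ∀ s, 0 ≤ f s)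
    (hfB : ∀ s, f s ≤ B) : ∑' s, α s * f s ≤ B :=
  calc ∑' s, α s * f s ≤ ∑' s, α s * B :=
        (hsp.summable_mul hf0 hfB).tsum_le_tsum
          (fun s => mul_le_mul_of_nonneg_left (hfB s) (hsp.1 s)) (hsp.summable.mul_right B)
    _ = B := by rw [tsum_mul_right, hsp.2.2.1, one_mul]

lemma IsSplit.hasSum_mul_const_add (hsp : IsSplit ξ α ξs) {f : ℕ → ℝ}
    (hf : Summable fun s => α s * f s) (a b : ℝ) :
    HasSum (fun s => α s * (a + b * f s)) (a + b * ∑' s, α s * f s) := by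
  have ha : HasSum (fun s => α s * a) a := by
    simpa [hsp.2.2.1] using hsp.summable.hasSum.mul_right a
  convert ha.add (hf.hasSum.mul_left b) using 1
  funext s
  ring

lemma isSplit_single (hξ : ξ ∈ stdSimplex ℝ K) : IsSplit ξ (Pi.single 0 1) fun _ => ξ :=
  ⟨fun s => by by_cases h : s = 0 <;> simp [h], fun _ => hξ, tsum_pi_single 0 1,
    fun ℓ => by rw [tsum_mul_right, tsum_pi_single, one_mul]⟩

lemma tsum_ite_zero_one_mul (a b : ℝ) (f : ℕ → ℝ) :
    ∑' s, (if s = 0 then a else if s = 1 then b else 0) * f s = a * f 0 + b * f 1 := by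
  rw [tsum_eq_sum (s := range 2) fun s hs => ?_]
  · simp [Finset.sum_range_succ]
  · have : 1 < s := by simpa using hs
    simp [show s ≠ 0 by omega, show s ≠ 1 by omega]

lemma isSplit_pair {x y : K → ℝ} (hx : x ∈ stdSimplex ℝ K) (hy : y ∈ stdSimplex ℝ K) {a b : ℝ}
    (ha : 0 ≤ a) (hb : 0 ≤ b) (hab : a + b = 1) :
    IsSplit (a • x + b • y) (fun s => if s = 0 then a else if s = 1 then b else 0)
      (fun s => if s = 0 then x else y) := by
  refine ⟨fun s => ?_, fun s => ?_, ?_, fun ℓ => ?_⟩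
  · dsimp only
    split_ifs <;> first | assumption | exact le_rfl
  · dsimp only
    split_ifs <;> assumption
  · simpa [hab] using tsum_ite_zero_one_mul a b fun _ => 1
  · simpa using tsum_ite_zero_one_mul a b fun s => (if s = 0 then x else y) ℓ

lemma IsSplit.vecMul (hsp : IsSplit ξ α ξs) {P : Matrix K K ℝ} (hP : IsStochastic P) :
    IsSplit (vecMul ξ P) α fun s => vecMul (ξs s) P := by
  refine ⟨hsp.1, fun s => hP.vecMul_mem_stdSimplex_s7 (hsp.2.1 s), hsp.2.2.1, fun j => ?_⟩
  have hcoord : ∀ i, HasSum (fun s => α s * ξs s i * P i j) (ξ i * P i j) := fun i => by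
    rw [← hsp.2.2.2 i]
    exact (hsp.summable_mul (fun s => (hsp.2.1 s).1 i)
      fun s => (mem_Icc_of_mem_stdSimplex (hsp.2.1 s) i).2).hasSum.mul_right (P i j)
  simpa [Matrix.vecMul, dotProduct, Finset.mul_sum, mul_assoc] using
    (hasSum_sum fun i _ => hcoord i).tsum_eq

variable {β : ℕ → ℕ → ℝ} {ζ : ℕ → ℕ → K → ℝ}

lemma IsSplit.tsum_bind_mul (hsp : IsSplit ξ α ξs) (hβ : ∀ s, IsSplit (ξs s) (β s) (ζ s))
    {f : (K → ℝ) → ℝ} {B : ℝ} (hf0 : ∀ η ∈ stdSimplex ℝ K, 0 ≤ f η)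
    (hfB : ∀ η ∈ stdSimplex ℝ K, f η ≤ B) :
    ∑' n : ℕ, α n.unpair.1 * β n.unpair.1 n.unpair.2 * f (ζ n.unpair.1 n.unpair.2) =
      ∑' s, α s * ∑' t, β s t * f (ζ s t) := by
  set F : ℕ × ℕ → ℝ := fun p => α p.1 * β p.1 p.2 * f (ζ p.1 p.2)
  have hf0' : ∀ s t, 0 ≤ f (ζ s t) := fun s t => hf0 _ ((hβ s).2.1 t)
  have hfB' : ∀ s t, f (ζ s t) ≤ B := fun s t => hfB _ ((hβ s).2.1 t)
  have hrow : ∀ s, HasSum (fun t => F (s, t)) (α s * ∑' t, β s t * f (ζ s t)) := fun s => by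
    simpa only [F, mul_assoc] using
      ((hβ s).summable_mul (hf0' s) (hfB' s)).hasSum.mul_left (α s)
  have hF : Summable F := by
    refine (summable_prod_of_nonneg fun p => ?_).2 ⟨fun s => (hrow s).summable, ?_⟩
    · exact mul_nonneg (mul_nonneg (hsp.1 _) ((hβ _).1 _)) (hf0' _ _)
    · simp only [fun s => (hrow s).tsum_eq]
      exact hsp.summable_mul (fun s => tsum_nonneg fun t => mul_nonneg ((hβ s).1 t) (hf0' s t))
        fun s => (hβ s).tsum_mul_le (hf0' s) (hfB' s)
  calc ∑' n : ℕ, F n.unpair = ∑' p, F p := Nat.pairEquiv.symm.tsum_eq F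
    _ = ∑' (s) (t), F (s, t) := hF.tsum_prod' fun s => (hrow s).summable
    _ = ∑' s, α s * ∑' t, β s t * f (ζ s t) := tsum_congr fun s => (hrow s).tsum_eq

lemma IsSplit.bind_s7 (hsp : IsSplit ξ α ξs) (hβ : ∀ s, IsSplit (ξs s) (β s) (ζ s)) :
    IsSplit ξ (fun n => α n.unpair.1 * β n.unpair.1 n.unpair.2)
      (fun n => ζ n.unpair.1 n.unpair.2) := by
  refine ⟨fun n => mul_nonneg (hsp.1 _) ((hβ _).1 _), fun n => (hβ _).2.1 _, ?_, fun ℓ => ?_⟩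
  · have hβ1 : ∀ s, ∑' t, β s t = 1 := fun s => (hβ s).2.2.1
    simpa [hβ1, hsp.2.2.1] using
      hsp.tsum_bind_mul hβ (f := fun _ => 1) (fun _ _ => zero_le_one) fun _ _ => le_rfl
  · have hβℓ : ∀ s, ∑' t, β s t * ζ s t ℓ = ξs s ℓ := fun s => (hβ s).2.2.2 ℓ
    simpa [hβℓ, hsp.2.2.2 ℓ] using
      hsp.tsum_bind_mul hβ (f := fun η => η ℓ) (fun η hη => hη.1 ℓ)
        fun η hη => (mem_Icc_of_mem_stdSimplex hη ℓ).2

end Split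

def stagePayoff (M : Matrix K K ℝ) (u : (K → ℝ) → ℝ) (δ : ℝ) (w : (K → ℝ) → ℝ)
    (η : K → ℝ) : ℝ :=
  (1 - δ) * u η + δ * w (vecMul η M)

section Value

variable {M : Matrix K K ℝ} {u : (K → ℝ) → ℝ} {C : ℝ} {v : ℝ → (K → ℝ) → ℝ} {δ : ℝ}
  {ξ : K → ℝ} {α : ℕ → ℝ} {ξs : ℕ → K → ℝ}

lemma value_le_of_forall_splitPayoff_le (hv : IsValueFamily M u C v)
    (hδ : δ ∈ Set.Ico (0 : ℝ) 1) (hξ : ξ ∈ stdSimplex ℝ K) {B : ℝ}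
    (hB : ∀ α ξs, IsSplit ξ α ξs → splitPayoff M u δ (v δ) α ξs ≤ B) : v δ ξ ≤ B := by
  rw [(hv δ hδ).2 ξ hξ]
  refine csSup_le ⟨_, _, _, isSplit_single hξ, rfl⟩ ?_
  rintro _ ⟨α, ξs, hsp, rfl⟩
  exact hB α ξs hsp

lemma exists_isSplit_value_sub_lt (hv : IsValueFamily M u C v) (hδ : δ ∈ Set.Ico (0 : ℝ) 1)
    (hξ : ξ ∈ stdSimplex ℝ K) {ε : ℝ} (hε : 0 < ε) :
    ∃ α ξs, IsSplit ξ α ξs ∧ v δ ξ - ε < splitPayoff M u δ (v δ) α ξs := by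
  have hlt := sub_lt_self (v δ ξ) hε
  nth_rw 2 [(hv δ hδ).2 ξ hξ] at hlt
  obtain ⟨_, ⟨α, ξs, hsp, rfl⟩, h⟩ :=
    exists_lt_of_lt_csSup (by exact ⟨_, _, _, isSplit_single hξ, rfl⟩) hlt
  exact ⟨α, ξs, hsp, h⟩

variable (hM : IsStochastic M) (hu0 : ∀ ξ ∈ stdSimplex ℝ K, 0 ≤ u ξ)
  (huC : C ∈ upperBounds (u '' stdSimplex ℝ K)) (hv : IsValueFamily M u C v)
  (hδ : δ ∈ Set.Ico (0 : ℝ) 1)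
include hM hu0 huC hv hδ

lemma stagePayoff_mem_Icc {η : K → ℝ} (hη : η ∈ stdSimplex ℝ K) :
    stagePayoff M u δ (v δ) η ∈ Set.Icc 0 C := by
  obtain ⟨hw0, hwC⟩ := (hv δ hδ).1 _ (hM.vecMul_mem_stdSimplex_s7 hη)
  have huη : u η ≤ C := huC (Set.mem_image_of_mem u hη)
  constructor <;> unfold stagePayoff <;> nlinarith [hu0 η hη, hδ.1, hδ.2]

lemma splitPayoff_le_value (hξ : ξ ∈ stdSimplex ℝ K) (hsp : IsSplit ξ α ξs) :
    splitPayoff M u δ (v δ) α ξs ≤ v δ ξ := by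
  rw [(hv δ hδ).2 ξ hξ]
  refine le_csSup ⟨C, ?_⟩ ⟨α, ξs, hsp, rfl⟩
  rintro _ ⟨α', ξs', hsp', rfl⟩
  exact hsp'.tsum_mul_le (fun s => (stagePayoff_mem_Icc hM hu0 huC hv hδ (hsp'.2.1 s)).1)
    fun s => (stagePayoff_mem_Icc hM hu0 huC hv hδ (hsp'.2.1 s)).2

lemma tsum_mul_value_le_value (hξ : ξ ∈ stdSimplex ℝ K) (hsp : IsSplit ξ α ξs) :
    ∑' s, α s * v δ (ξs s) ≤ v δ ξ := by
  have hstage := fun η (hη : η ∈ stdSimplex ℝ K) => stagePayoff_mem_Icc hM hu0 huC hv hδ hη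
  refine le_of_forall_pos_le_add fun ε hε => ?_
  -- split every `ξs s` `ε`-optimally and compose these splits with `α`
  choose β ζ hβ hβε using fun s => exists_isSplit_value_sub_lt hv hδ (hsp.2.1 s) hε
  have hpay : ∀ s, splitPayoff M u δ (v δ) (β s) (ζ s) ∈ Set.Icc 0 C := fun s =>
    ⟨tsum_nonneg fun t => mul_nonneg ((hβ s).1 t) (hstage _ ((hβ s).2.1 t)).1,
      (hβ s).tsum_mul_le (fun t => (hstage _ ((hβ s).2.1 t)).1)
        fun t => (hstage _ ((hβ s).2.1 t)).2⟩
  have hbind : ∑' s, α s * splitPayoff M u δ (v δ) (β s) (ζ s) ≤ v δ ξ :=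
    (hsp.tsum_bind_mul hβ (f := stagePayoff M u δ (v δ)) (fun η hη => (hstage η hη).1)
      fun η hη => (hstage η hη).2).symm.trans_le
      (splitPayoff_le_value hM hu0 huC hv hδ hξ (hsp.bind_s7 hβ))
  have hsum := hsp.hasSum_mul_const_add
    (hsp.summable_mul (fun s => (hpay s).1) fun s => (hpay s).2) ε 1
  calc ∑' s, α s * v δ (ξs s)
      ≤ ∑' s, α s * (ε + 1 * splitPayoff M u δ (v δ) (β s) (ζ s)) :=
        (hsp.summable_mul (fun s => ((hv δ hδ).1 _ (hsp.2.1 s)).1)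
          fun s => ((hv δ hδ).1 _ (hsp.2.1 s)).2).tsum_le_tsum
          (fun s => mul_le_mul_of_nonneg_left (by linarith [hβε s]) (hsp.1 s)) hsum.summable
    _ = ε + 1 * ∑' s, α s * splitPayoff M u δ (v δ) (β s) (ζ s) := hsum.tsum_eq
    _ ≤ v δ ξ + ε := by linarith

lemma concaveOn_value : ConcaveOn ℝ (stdSimplex ℝ K) (v δ) := by
  refine ⟨convex_stdSimplex ℝ K, fun x hx y hy a b ha hb hab => ?_⟩
  have h := tsum_mul_value_le_value hM hu0 huC hv hδ (convex_stdSimplex ℝ K hx hy ha hb hab)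
    (isSplit_pair hx hy ha hb hab)
  rw [tsum_ite_zero_one_mul] at h
  simpa using h

lemma mul_value_vecMul_le_value (hξ : ξ ∈ stdSimplex ℝ K) :
    δ * v δ (vecMul ξ M) ≤ v δ ξ := by
  have h := splitPayoff_le_value hM hu0 huC hv hδ hξ (isSplit_single hξ)
  rw [splitPayoff, tsum_mul_right, tsum_pi_single, one_mul] at h
  linarith [mul_nonneg (sub_nonneg.2 hδ.2.le) (hu0 ξ hξ)]

lemma value_le_one_sub_mul_add_mul_value_vecMul (hξ : ξ ∈ stdSimplex ℝ K) :
    v δ ξ ≤ (1 - δ) * C + δ * v δ (vecMul ξ M) := by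
  refine value_le_of_forall_splitPayoff_le hv hδ hξ fun α ξs hsp => ?_
  have hw : ∀ s, v δ (vecMul (ξs s) M) ∈ Set.Icc 0 C := fun s =>
    (hv δ hδ).1 _ (hM.vecMul_mem_stdSimplex_s7 (hsp.2.1 s))
  have hsum := hsp.hasSum_mul_const_add
    (hsp.summable_mul (fun s => (hw s).1) fun s => (hw s).2) ((1 - δ) * C) δ
  calc splitPayoff M u δ (v δ) α ξs
      ≤ ∑' s, α s * ((1 - δ) * C + δ * v δ (vecMul (ξs s) M)) := by
        refine Summable.tsum_le_tsum (fun s => mul_le_mul_of_nonneg_left ?_ (hsp.1 s))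
          (hsp.summable_mul (fun s => (stagePayoff_mem_Icc hM hu0 huC hv hδ (hsp.2.1 s)).1)
            fun s => (stagePayoff_mem_Icc hM hu0 huC hv hδ (hsp.2.1 s)).2) hsum.summable
        exact add_le_add_left (mul_le_mul_of_nonneg_left
          (huC (Set.mem_image_of_mem u (hsp.2.1 s))) (sub_nonneg.2 hδ.2.le)) _
    _ = (1 - δ) * C + δ * ∑' s, α s * v δ (vecMul (ξs s) M) := hsum.tsum_eq
    _ ≤ (1 - δ) * C + δ * v δ (vecMul ξ M) := by
        gcongr
        · exact hδ.1
        · exact tsum_mul_value_le_value hM hu0 huC hv hδ (hM.vecMul_mem_stdSimplex_s7 hξ)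
            (hsp.vecMul hM)

lemma abs_value_sub_value_vecMul_le (hξ : ξ ∈ stdSimplex ℝ K) :
    |v δ ξ - v δ (vecMul ξ M)| ≤ (1 - δ) * C := by
  have hlow := mul_value_vecMul_le_value hM hu0 huC hv hδ hξ
  have hup := value_le_one_sub_mul_add_mul_value_vecMul hM hu0 huC hv hδ hξ
  obtain ⟨hw0, hwC⟩ := (hv δ hδ).1 _ (hM.vecMul_mem_stdSimplex_s7 hξ)
  rw [abs_le]
  constructor <;> nlinarith [hδ.2]

lemma abs_value_sub_value_vecMul_pow_le [DecidableEq K] (hξ : ξ ∈ stdSimplex ℝ K) (n : ℕ) :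
    |v δ ξ - v δ (vecMul ξ (M ^ n))| ≤ n * ((1 - δ) * C) := by
  induction n with
  | zero => simp
  | succ n ih =>
    have hstep := abs_value_sub_value_vecMul_le hM hu0 huC hv hδ
      ((hM.pow n).vecMul_mem_stdSimplex_s7 hξ)
    rw [vecMul_vecMul, ← pow_succ] at hstep
    calc |v δ ξ - v δ (vecMul ξ (M ^ (n + 1)))|
        ≤ |v δ ξ - v δ (vecMul ξ (M ^ n))|
          + |v δ (vecMul ξ (M ^ n)) - v δ (vecMul ξ (M ^ (n + 1)))| := abs_sub_le _ _ _
      _ ≤ n * ((1 - δ) * C) + (1 - δ) * C := add_le_add ih hstep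
      _ = (n + 1 : ℕ) * ((1 - δ) * C) := by push_cast; ring

lemma value_le_value_add_div_mul {p q : K → ℝ} (hp : p ∈ stdSimplex ℝ K)
    (hq : q ∈ stdSimplex ℝ K) {c d : ℝ} (hc : 0 < c) (hd : 0 < d) (hqc : ∀ ℓ, c ≤ q ℓ)
    (hpq : ∀ ℓ, |p ℓ - q ℓ| ≤ d) : v δ p ≤ v δ q + d / c * C := by
  -- `q = a • p + b • r` for a belief `r`: `a • p ≤ a • (q + d) ≤ q` since `q ≥ c`
  set a := c / (c + d)
  set b := d / (c + d)
  have hab : a + b = 1 := by rw [← add_div, div_self (by positivity)]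
  have hb : 0 < b := by positivity
  have hap : ∀ ℓ, a * p ℓ ≤ q ℓ := fun ℓ => by
    have := (abs_le.1 (hpq ℓ)).2
    rw [div_mul_eq_mul_div, div_le_iff₀ (by positivity)]
    nlinarith [hqc ℓ]
  set r : K → ℝ := fun ℓ => (q ℓ - a * p ℓ) / b
  have hr : r ∈ stdSimplex ℝ K := by
    refine ⟨fun ℓ => div_nonneg (sub_nonneg.2 (hap ℓ)) hb.le, ?_⟩
    rw [← Finset.sum_div, Finset.sum_sub_distrib, ← Finset.mul_sum, hq.2, hp.2, mul_one,
      div_eq_one_iff_eq hb.ne']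
    linarith
  have hq_eq : a • p + b • r = q := by
    funext ℓ
    simp only [Pi.add_apply, Pi.smul_apply, smul_eq_mul, r]
    field_simp
    ring
  have hconc := (concaveOn_value hM hu0 huC hv hδ).2 hp hr (by positivity) hb.le hab
  rw [hq_eq, smul_eq_mul, smul_eq_mul] at hconc
  obtain ⟨hvp0, hvpC⟩ := (hv δ hδ).1 p hp
  have hvr := ((hv δ hδ).1 r hr).1
  have hbdc : b ≤ d / c := div_le_div_of_nonneg_left hd.le hc (by linarith)
  calc v δ p = a * v δ p + b * v δ p := by rw [← add_mul, hab, one_mul]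
    _ ≤ v δ q + b * C := by nlinarith [mul_nonneg hb.le hvr, mul_le_mul_of_nonneg_left hvpC hb.le]
    _ ≤ v δ q + d / c * C := by gcongr; linarith

lemma abs_value_sub_value_le {p q : K → ℝ} (hp : p ∈ stdSimplex ℝ K)
    (hq : q ∈ stdSimplex ℝ K) {c d : ℝ} (hd : 0 < d) (hdc : 2 * d ≤ c) (hqc : ∀ ℓ, c ≤ q ℓ)
    (hpq : ∀ ℓ, |p ℓ - q ℓ| ≤ d) : |v δ p - v δ q| ≤ 2 * d / c * C := by
  have hc : 0 < c := by linarith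
  have hpc : ∀ ℓ, c / 2 ≤ p ℓ := fun ℓ => by linarith [(abs_le.1 (hpq ℓ)).1, hqc ℓ]
  have hC : 0 ≤ C := ((hv δ hδ).1 p hp).1.trans ((hv δ hδ).1 p hp).2
  have h1 := value_le_value_add_div_mul hM hu0 huC hv hδ hp hq hc hd hqc hpq
  have h2 := value_le_value_add_div_mul hM hu0 huC hv hδ hq hp (half_pos hc) hd hpc
    fun ℓ => abs_sub_comm (p ℓ) (q ℓ) ▸ hpq ℓ
  have h12 : d / c * C ≤ 2 * d / c * C := by gcongr; linarith
  rw [div_div_eq_mul_div, mul_comm d 2] at h2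
  rw [abs_le]
  constructor <;> linarith

lemma abs_value_sub_value_le_of_sum_abs_le [DecidableEq K] {π : K → ℝ}
    (hπ : π ∈ stdSimplex ℝ K) {c : ℝ} (hc : ∀ ℓ, c ≤ π ℓ) (hδc : 1 - δ ≤ c)
    (hξ : ξ ∈ stdSimplex ℝ K) {n : ℕ}
    (hmix : ∑ ℓ, |vecMul ξ (M ^ n) ℓ - π ℓ| ≤ (1 - δ) / 2) :
    |v δ ξ - v δ π| ≤ (n + 1 / c) * ((1 - δ) * C) := by
  have hε : 0 < 1 - δ := sub_pos.2 hδ.2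
  have h1 := abs_value_sub_value_vecMul_pow_le hM hu0 huC hv hδ hξ n
  have h2 := abs_value_sub_value_le hM hu0 huC hv hδ ((hM.pow n).vecMul_mem_stdSimplex_s7 hξ) hπ
    (half_pos hε) (by linarith) hc fun ℓ =>
      (Finset.single_le_sum (fun ℓ _ => abs_nonneg (vecMul ξ (M ^ n) ℓ - π ℓ))
        (Finset.mem_univ ℓ)).trans hmix
  calc |v δ ξ - v δ π| ≤ n * ((1 - δ) * C) + 2 * ((1 - δ) / 2) / c * C :=
        (abs_sub_le _ _ _).trans (add_le_add h1 h2)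
    _ = (n + 1 / c) * ((1 - δ) * C) := by
        field_simp [(hε.trans_le hδc).ne']

end Value

lemma one_le_logb_one_div {ε : ℝ} (hε0 : 0 < ε) (hε : ε ≤ 1 / 2) : 1 ≤ Real.logb 2 (1 / ε) := by
  rw [Real.le_logb_iff_rpow_le one_lt_two (by positivity), Real.rpow_one, le_div_iff₀ hε0]
  linarith

/-- `j = ⌈log₂(1/ε)⌉ + 2` works. -/
lemma exists_half_pow_le_and_le_four_mul_logb {ε : ℝ} (hε0 : 0 < ε) (hε : ε ≤ 1 / 2) :
    ∃ j : ℕ, (1 / 2 : ℝ) ^ j ≤ ε / 4 ∧ (j : ℝ) ≤ 4 * Real.logb 2 (1 / ε) := by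
  set L := Real.logb 2 (1 / ε)
  have h2L : 1 / ε ≤ 2 ^ ⌈L⌉₊ :=
    calc 1 / ε = 2 ^ L := (Real.rpow_logb (by norm_num) (by norm_num) (by positivity)).symm
      _ ≤ 2 ^ (⌈L⌉₊ : ℝ) := Real.rpow_le_rpow_of_exponent_le (by norm_num) (Nat.le_ceil L)
      _ = 2 ^ ⌈L⌉₊ := Real.rpow_natCast 2 _
  refine ⟨⌈L⌉₊ + 2, ?_, ?_⟩
  · calc (1 / 2 : ℝ) ^ (⌈L⌉₊ + 2) = 1 / 2 ^ ⌈L⌉₊ / 4 := by rw [pow_add, _root_.one_div_pow]; ring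
      _ ≤ ε / 4 := by gcongr; rwa [one_div_le (by positivity) hε0]
  · have hL := one_le_logb_one_div hε0 hε
    have := Nat.ceil_lt_add_one (zero_le_one.trans hL)
    push_cast
    linarith

end Development

theorem markovian_persuasion_value_close_to_value_at_invariant_general
    {K : Type*} [Fintype K] [DecidableEq K]
    (M : Matrix K K ℝ) (hM : IsStochastic M)
    (herg : ∃ N : ℕ, 1 ≤ N ∧ ∀ i j, 0 < (M ^ N) i j)
    (u : (K → ℝ) → ℝ) (hu0 : ∀ ξ ∈ stdSimplex ℝ K, 0 ≤ u ξ)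
    (C : ℝ) (hC : IsLUB (u '' stdSimplex ℝ K) C)
    (v : ℝ → (K → ℝ) → ℝ) (hv : IsValueFamily M u C v)
    (πM : K → ℝ) (hπ : πM ∈ stdSimplex ℝ K) (hπinv : Matrix.vecMul πM M = πM)
    (hπpos : ∀ ℓ, 0 < πM ℓ)
    (cstar : ℝ) (hcstar : IsLeast (Set.range πM) cstar) :
    ∃ Cconst : ℝ, 0 < Cconst ∧
      ∀ δ : ℝ, 1 - cstar / 2 < δ → δ < 1 →
        ∀ ξ ∈ stdSimplex ℝ K,
          |v δ ξ - v δ πM| ≤ Cconst * ((1 - δ) * Real.logb 2 (1 / (1 - δ))) := by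
  obtain ⟨T, hT⟩ := hM.exists_sum_abs_vecMul_pow_sub_le (herg.imp fun _ => And.right) hπ hπinv
  obtain ⟨⟨ℓ₀, hℓ₀⟩, hcstar_le⟩ := hcstar
  have hcstar0 : 0 < cstar := hℓ₀ ▸ hπpos ℓ₀
  have hcstar1 : cstar ≤ 1 := hℓ₀ ▸ (mem_Icc_of_mem_stdSimplex hπ ℓ₀).2
  have hC0 : 0 ≤ C := (hu0 πM hπ).trans (hC.1 (Set.mem_image_of_mem u hπ))
  refine ⟨4 * T * C + C / cstar + 1, ?_, fun δ hδc hδ1 ξ hξ => ?_⟩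
  · linarith [mul_nonneg (by positivity : (0 : ℝ) ≤ 4 * T) hC0, div_nonneg hC0 hcstar0.le]
  set ε := 1 - δ
  have hε : 0 < ε := sub_pos.2 hδ1
  have hL := one_le_logb_one_div hε (by linarith)
  set L := Real.logb 2 (1 / ε)
  obtain ⟨j, hj_pow, hj_log⟩ := exists_half_pow_le_and_le_four_mul_logb hε (by linarith)
  have hbound := abs_value_sub_value_le_of_sum_abs_le hM hu0 hC.1 hv ⟨by linarith, hδ1⟩ hπ
    (fun ℓ => hcstar_le ⟨ℓ, rfl⟩) (by linarith) hξ ((hT ξ hξ j).trans (by linarith))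
  have hcoef : ((T * j : ℕ) : ℝ) + 1 / cstar ≤ (4 * T + 1 / cstar) * L := by
    push_cast
    nlinarith [mul_le_mul_of_nonneg_left hj_log (Nat.cast_nonneg T),
      le_mul_of_one_le_right (one_div_pos.2 hcstar0).le hL]
  calc |v δ ξ - v δ πM| ≤ (4 * T + 1 / cstar) * L * (ε * C) :=
        hbound.trans (mul_le_mul_of_nonneg_right hcoef (mul_nonneg hε.le hC0))
    _ = (4 * T * C + C / cstar) * (ε * L) := by ring
    _ ≤ (4 * T * C + C / cstar + 1) * (ε * L) :=
        mul_le_mul_of_nonneg_right (by linarith) (mul_nonneg hε.le (zero_le_one.trans hL))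

theorem markovian_persuasion_value_close_to_value_at_invariant
    {K : Type*} [Fintype K] [Nonempty K] [DecidableEq K]
    (M : Matrix K K ℝ) (hM : IsStochastic M)
    (herg : ∃ N : ℕ, 1 ≤ N ∧ ∀ i j, 0 < (M ^ N) i j)
    (u : (K → ℝ) → ℝ) (hu0 : ∀ ξ ∈ stdSimplex ℝ K, 0 ≤ u ξ)
    (husc : UpperSemicontinuousOn u (stdSimplex ℝ K))
    (C : ℝ) (hC : IsLUB (u '' stdSimplex ℝ K) C)
    (v : ℝ → (K → ℝ) → ℝ) (hv : IsValueFamily M u C v)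
    (πM : K → ℝ) (hπ : πM ∈ stdSimplex ℝ K) (hπinv : Matrix.vecMul πM M = πM)
    (hπuniq : ∀ π' ∈ stdSimplex ℝ K, Matrix.vecMul π' M = π' → π' = πM)
    (hπpos : ∀ ℓ, 0 < πM ℓ)
    (cstar : ℝ) (hcstar : IsLeast (Set.range πM) cstar) :
    ∃ Cconst : ℝ, 0 < Cconst ∧
      ∀ δ : ℝ, 1 - cstar / 2 < δ → δ < 1 →
        ∀ ξ ∈ stdSimplex ℝ K,
          |v δ ξ - v δ πM| ≤ Cconst * ((1 - δ) * Real.logb 2 (1 / (1 - δ))) :=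
  markovian_persuasion_value_close_to_value_at_invariant_general M hM herg u hu0 C hC v hv πM hπ
    hπinv hπpos cstar hcstar
end
end
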